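/- arXiv:1009.4064 — 3 statements merged into one kernel-verified Lean document; each statement's English description precedes it below -/
import Mathlib

section
/- For bipartitions λ, μ in the same block, d_{λμ}(q) ≠ 0 if and only if x_μ is obtained from x_λ by reversing the labels (swapping ∨ and ∧) at the endpoint pairs of some subset S of the caps of c_λ; in that case d_{λμ}(q) = q^{|S|}. -/
/-- The four labels `∘, ×, ∨, ∧` used in weight diagrams. -/
inductive Lbl : Type
  | circ  -- `∘`
  | times -- `×`
  | vee   -- `∨`
  | wedge -- `∧`
  deriving DecidableEq

/-- Index set `ℤ ∖ {0}`. -/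
def Zstar : Type := {i : ℤ // i ≠ 0}

/-- `A⁺`: elements with `⋯ > x_{−2} > x_{−1}` and `x_1 > x_2 > ⋯`. -/
def Aplus (x : Zstar → ℤ) : Prop :=
  ∀ i j : Zstar, i.1 < j.1 → (j.1 < 0 ∨ 0 < i.1) → x j < x i

/-- `I_∨(x) = {x_i : i < 0}`. -/
def Ivee (x : Zstar → ℤ) : Set ℤ := {v | ∃ i : Zstar, i.1 < 0 ∧ x i = v}

/-- `I_∧(x) = {x_i : i > 0}`. -/
def Iwedge (x : Zstar → ℤ) : Set ℤ := {v | ∃ i : Zstar, 0 < i.1 ∧ x i = v}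

open Classical in
/-- The diagram of `x ∈ A⁺`: vertex `n` is labelled `∘`, `×`, `∨` or `∧`
according to whether `n` lies in neither, both, only `I_∨`, or only `I_∧`. -/
noncomputable def diagram (x : Zstar → ℤ) : ℤ → Lbl := fun n =>
  if n ∈ Ivee x then (if n ∈ Iwedge x then Lbl.times else Lbl.vee)
  else (if n ∈ Iwedge x then Lbl.wedge else Lbl.circ)

/-- One covering move of the partial order on diagrams: `d' ` is obtained from
`d` by swapping a `∨` and a `∧` so that the `∧` moves to the right. -/
def Step (d d' : ℤ → Lbl) : Prop :=
  ∃ i j : ℤ, i < j ∧ d i = Lbl.wedge ∧ d j = Lbl.vee ∧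
    d' i = Lbl.vee ∧ d' j = Lbl.wedge ∧ ∀ n, n ≠ i → n ≠ j → d' n = d n

/-- Strict order generated by the swapping moves. -/
def DiagLt (d d' : ℤ → Lbl) : Prop := Relation.TransGen Step d d'

/-- Non-strict order generated by the swapping moves. -/
def DiagLe (d d' : ℤ → Lbl) : Prop := Relation.ReflTransGen Step d d'

/-- The weight `x_λ = λ̄ + ρ_δ` attached to a bipartition `(λL, λR)` (encoded
as weakly decreasing eventually-zero sequences indexed from 0):
`x_{-k} = k - λ^L_k` and `x_k = λ^R_k + δ - k + 1` for `k ≥ 1`. -/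
def xBipart (δ : ℤ) (lamL lamR : ℕ → ℕ) : Zstar → ℤ := fun i =>
  if 0 < i.1 then (lamR (i.1.toNat - 1) : ℤ) + (δ - i.1 + 1)
  else (-i.1) - (lamL ((-i.1).toNat - 1) : ℤ)

/-- A bipartition: both sequences weakly decreasing and eventually zero. -/
def IsBipartition (lamL lamR : ℕ → ℕ) : Prop :=
  Antitone lamL ∧ Antitone lamR ∧
    (∃ N, ∀ i, N ≤ i → lamL i = 0) ∧ (∃ N, ∀ i, N ≤ i → lamR i = 0)

/-- A label is trivial if it is `∘` or `×`. -/
def Triv (s : Lbl) : Prop := s = Lbl.circ ∨ s = Lbl.times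

/-- Boundary condition: labelled `∧` for `n ≪ 0` and `∨` for `n ≫ 0`. -/
def Bdd (d : ℤ → Lbl) : Prop :=
  ∃ N : ℤ, (∀ n : ℤ, n ≤ -N → d n = Lbl.wedge) ∧ (∀ n : ℤ, N ≤ n → d n = Lbl.vee)

/-- `n` is an endpoint of a cap in `C`. -/
def OnCap (C : Set (ℤ × ℤ)) (n : ℤ) : Prop := ∃ p ∈ C, p.1 = n ∨ p.2 = n

/-- `(i,j)` is a neighbouring `∨∧` pair relative to the existing caps `C`:
`i < j`, `i` is labelled `∨`, `j` is labelled `∧`, neither is already on a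
cap, and every vertex strictly between them is labelled `∘` or `×` or already
lies on a cap of `C`. -/
def ValidPair (d : ℤ → Lbl) (C : Set (ℤ × ℤ)) (i j : ℤ) : Prop :=
  i < j ∧ d i = Lbl.vee ∧ d j = Lbl.wedge ∧ ¬ OnCap C i ∧ ¬ OnCap C j ∧
    ∀ k, i < k → k < j → Triv (d k) ∨ OnCap C k

/-- One step of the cap construction: join a neighbouring `∨∧` pair by a cap. -/
def AddCap (d : ℤ → Lbl) (C C' : Set (ℤ × ℤ)) : Prop :=
  ∃ i j, ValidPair d C i j ∧ C' = insert (i, j) C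

/-- `C` is reachable from the empty configuration by cap-adding steps. -/
def Reachable (d : ℤ → Lbl) (C : Set (ℤ × ℤ)) : Prop :=
  Relation.ReflTransGen (AddCap d) ∅ C

/-- No neighbouring `∨∧` pair remains. -/
def Complete (d : ℤ → Lbl) (C : Set (ℤ × ℤ)) : Prop :=
  ¬ ∃ i j, ValidPair d C i j

/-- `C` is the (completed) cap diagram of `d`. -/
def IsCapDiagram (d : ℤ → Lbl) (C : Set (ℤ × ℤ)) : Prop :=
  Reachable d C ∧ Complete d C

/-- The labelled cap diagram `c x` is oriented, where `c` is the cap diagram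
(caps `C`, rays at the uncapped nontrivial vertices of the underlying weight
`d`) and `x` is a weight diagram: free vertices of `c` are labelled `∘` or `×`
in `x`; each cap carries exactly one `∨` and one `∧`; each ray vertex carries
`∨` or `∧`; and no two rays are labelled `∨` then `∧` from left to right. -/
def Oriented (d : ℤ → Lbl) (C : Set (ℤ × ℤ)) (x : ℤ → Lbl) : Prop :=
  (∀ n, ¬ OnCap C n → Triv (d n) → Triv (x n)) ∧
  (∀ p ∈ C, (x p.1 = Lbl.vee ∧ x p.2 = Lbl.wedge) ∨
            (x p.1 = Lbl.wedge ∧ x p.2 = Lbl.vee)) ∧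
  (∀ n, ¬ OnCap C n → ¬ Triv (d n) → (x n = Lbl.vee ∨ x n = Lbl.wedge)) ∧
  (∀ m n : ℤ, m < n → ¬ OnCap C m → ¬ OnCap C n → ¬ Triv (d m) → ¬ Triv (d n) →
    ¬ (x m = Lbl.vee ∧ x n = Lbl.wedge))

/-- The number of clockwise caps (labelled `∧` then `∨`) of the labelled cap
diagram: its degree. -/
noncomputable def clockCount (C : Set (ℤ × ℤ)) (x : ℤ → Lbl) : ℕ :=
  {p ∈ C | x p.1 = Lbl.wedge ∧ x p.2 = Lbl.vee}.ncard

/-- Two weight diagrams lie in the same block (`W`-orbit): they agree on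
trivial labels, differ in finitely many places, and are obtained from each
other by permuting a finite number of `∧`s and `∨`s pairwise. -/
def SameBlock (d d' : ℤ → Lbl) : Prop :=
  (∀ n, Triv (d n) → d' n = d n) ∧ (∀ n, Triv (d' n) → d n = d' n) ∧
  {n | d n ≠ d' n}.Finite ∧
  {n | d n = Lbl.wedge ∧ d' n = Lbl.vee}.ncard
    = {n | d n = Lbl.vee ∧ d' n = Lbl.wedge}.ncard

lemma onCap_mono {S C : Set (ℤ × ℤ)} (hSC : S ⊆ C) {n : ℤ} (h : OnCap S n) : OnCap C n := by
  obtain ⟨p, hp, h⟩ := h; exact ⟨p, hSC hp, h⟩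

/-- Structural invariant of reachable cap configurations: each cap goes left to
right from a `∨` to a `∧`, and distinct caps share no endpoints. -/
lemma reach_good {d : ℤ → Lbl} {C : Set (ℤ × ℤ)} (h : Reachable d C) :
    (∀ p ∈ C, p.1 < p.2 ∧ d p.1 = Lbl.vee ∧ d p.2 = Lbl.wedge) ∧
    (∀ p ∈ C, ∀ q ∈ C, p ≠ q →
      p.1 ≠ q.1 ∧ p.1 ≠ q.2 ∧ p.2 ≠ q.1 ∧ p.2 ≠ q.2) := by
  induction h with
  | refl => simp
  | tail _ hstep ih =>
    obtain ⟨i, j, ⟨hij, hdi, hdj, hni, hnj, _⟩, rfl⟩ := hstep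
    obtain ⟨ih1, ih2⟩ := ih
    constructor
    · rintro p (rfl | hp)
      · exact ⟨hij, hdi, hdj⟩
      · exact ih1 p hp
    · rintro p (rfl | hp) q (rfl | hq) hne
      · exact absurd rfl hne
      · refine ⟨?_, ?_, ?_, ?_⟩ <;> simp only [] <;> rintro rfl
        · exact hni ⟨q, hq, Or.inl rfl⟩
        · exact hni ⟨q, hq, Or.inr rfl⟩
        · exact hnj ⟨q, hq, Or.inl rfl⟩
        · exact hnj ⟨q, hq, Or.inr rfl⟩
      · refine ⟨?_, ?_, ?_, ?_⟩ <;> simp only [] <;> intro h'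
        · exact hni ⟨p, hp, Or.inl h'⟩
        · exact hnj ⟨p, hp, Or.inl h'⟩
        · exact hni ⟨p, hp, Or.inr h'⟩
        · exact hnj ⟨p, hp, Or.inr h'⟩
      · exact ih2 p hp q hq hne

/-- In a complete configuration there is no uncapped `∨` to the left of an
uncapped `∧`. -/
lemma complete_no_vw {d : ℤ → Lbl} {C : Set (ℤ × ℤ)} (hcomp : Complete d C) :
    ∀ i j : ℤ, i < j → ¬ OnCap C i → ¬ OnCap C j →
      d i = Lbl.vee → d j = Lbl.wedge → False := by
  have key : ∀ k : ℕ, ∀ i j : ℤ, (j - i).toNat ≤ k → i < j → ¬ OnCap C i → ¬ OnCap C j →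
      d i = Lbl.vee → d j = Lbl.wedge → False := by
    intro k
    induction k with
    | zero => intro i j hk hij _ _ _ _; omega
    | succ k ih =>
      intro i j hk hij hi hj hdi hdj
      by_cases hmid : ∀ m, i < m → m < j → Triv (d m) ∨ OnCap C m
      · exact hcomp ⟨i, j, hij, hdi, hdj, hi, hj, hmid⟩
      · push_neg at hmid
        obtain ⟨m, him, hmj, hnt, hnc⟩ := hmid
        rcases hm : d m with _ | _ | _ | _
        · exact hnt (Or.inl hm)
        · exact hnt (Or.inr hm)
        · exact ih m j (by omega) hmj hnc hj hm hdj
        · exact ih i m (by omega) him hi hnc hdi hm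
  intro i j hij
  exact key (j - i).toNat i j le_rfl hij

/-- Main abstract lemma: the theorem for arbitrary weight diagrams `d, x`. -/
lemma oriented_main (d x : ℤ → Lbl) (C : Set (ℤ × ℤ)) (hC : IsCapDiagram d C)
    (hblock : SameBlock d x) :
    (Oriented d C x ↔ ∃ S ⊆ C,
        (∀ n : ℤ, ¬ OnCap S n → x n = d n) ∧
        (∀ p ∈ S, x p.1 = Lbl.wedge ∧ x p.2 = Lbl.vee)) ∧
    (∀ S ⊆ C, (∀ n : ℤ, ¬ OnCap S n → x n = d n) →
      (∀ p ∈ S, x p.1 = Lbl.wedge ∧ x p.2 = Lbl.vee) →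
      clockCount C x = S.ncard) := by
  obtain ⟨hreach, hcomp⟩ := hC
  obtain ⟨good1, good2⟩ := reach_good hreach
  have novw := complete_no_vw hcomp
  -- endpoints of a cap not in S are not on any cap of S
  have hfresh : ∀ S ⊆ C, ∀ p ∈ C, p ∉ S → ¬ OnCap S p.1 ∧ ¬ OnCap S p.2 := by
    intro S hSC p hpC hpS
    constructor <;> rintro ⟨q, hqS, hq | hq⟩
    · exact (good2 q (hSC hqS) p hpC (by rintro rfl; exact hpS hqS)).1 hq
    · exact (good2 q (hSC hqS) p hpC (by rintro rfl; exact hpS hqS)).2.2.1 hq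
    · exact (good2 q (hSC hqS) p hpC (by rintro rfl; exact hpS hqS)).2.1 hq
    · exact (good2 q (hSC hqS) p hpC (by rintro rfl; exact hpS hqS)).2.2.2 hq
  have count : ∀ S ⊆ C, (∀ n : ℤ, ¬ OnCap S n → x n = d n) →
      (∀ p ∈ S, x p.1 = Lbl.wedge ∧ x p.2 = Lbl.vee) →
      clockCount C x = S.ncard := by
    intro S hSC h1 h2
    have hset : {p ∈ C | x p.1 = Lbl.wedge ∧ x p.2 = Lbl.vee} = S := by
      ext p
      simp only [Set.mem_sep_iff]
      constructor
      · rintro ⟨hpC, hw, _⟩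
        by_contra hpS
        have hx1 := h1 p.1 (hfresh S hSC p hpC hpS).1
        rw [(good1 p hpC).2.1] at hx1
        rw [hx1] at hw
        exact Lbl.noConfusion hw
      · intro hpS
        exact ⟨hSC hpS, h2 p hpS⟩
    rw [clockCount, hset]
  refine ⟨⟨?_, ?_⟩, count⟩
  · -- Oriented → ∃ S
    rintro ⟨o1, o2, o3, o4⟩
    -- first: x = d at uncapped (ray) vertices
    have hray : ∀ n : ℤ, ¬ OnCap C n → ¬ Triv (d n) → x n = d n := by
      set Sw : Set (ℤ × ℤ) := {p ∈ C | x p.1 = Lbl.wedge} with hSw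
      have hSwC : Sw ⊆ C := fun p hp => hp.1
      have hSwOr : ∀ p ∈ Sw, x p.1 = Lbl.wedge ∧ x p.2 = Lbl.vee := by
        intro p hp
        rcases o2 p hp.1 with h | h
        · rw [hp.2] at h; exact absurd h.1 (by simp)
        · exact h
      set Wc : Set ℤ := {n | OnCap C n ∧ d n = Lbl.wedge ∧ x n = Lbl.vee} with hWc
      set Vc : Set ℤ := {n | OnCap C n ∧ d n = Lbl.vee ∧ x n = Lbl.wedge} with hVc
      set Wr : Set ℤ := {n | ¬ OnCap C n ∧ d n = Lbl.wedge ∧ x n = Lbl.vee} with hWr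
      set Vr : Set ℤ := {n | ¬ OnCap C n ∧ d n = Lbl.vee ∧ x n = Lbl.wedge} with hVr
      have hWcim : Wc = Prod.snd '' Sw := by
        ext n
        constructor
        · rintro ⟨⟨p, hpC, hn | hn⟩, hdn, hxn⟩
          · subst hn; rw [(good1 p hpC).2.1] at hdn; exact absurd hdn (by simp)
          · subst hn
            refine ⟨p, ⟨hpC, ?_⟩, rfl⟩
            rcases o2 p hpC with h | h
            · rw [hxn] at h; exact absurd h.2 (by simp)
            · exact h.1
        · rintro ⟨p, hp, rfl⟩
          exact ⟨⟨p, hp.1, Or.inr rfl⟩, (good1 p hp.1).2.2, (hSwOr p hp).2⟩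
      have hVcim : Vc = Prod.fst '' Sw := by
        ext n
        constructor
        · rintro ⟨⟨p, hpC, hn | hn⟩, hdn, hxn⟩
          · subst hn
            refine ⟨p, ⟨hpC, hxn⟩, rfl⟩
          · subst hn; rw [(good1 p hpC).2.2] at hdn; exact absurd hdn (by simp)
        · rintro ⟨p, hp, rfl⟩
          exact ⟨⟨p, hp.1, Or.inl rfl⟩, (good1 p hp.1).2.1, hp.2⟩
      have hinj2 : Set.InjOn Prod.snd Sw := by
        intro p hp q hq hpq
        by_contra hne
        exact (good2 p (hSwC hp) q (hSwC hq) hne).2.2.2 hpq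
      have hinj1 : Set.InjOn Prod.fst Sw := by
        intro p hp q hq hpq
        by_contra hne
        exact (good2 p (hSwC hp) q (hSwC hq) hne).1 hpq
      have hcardc : Wc.ncard = Vc.ncard := by
        rw [hWcim, hVcim, Set.ncard_image_of_injOn hinj2, Set.ncard_image_of_injOn hinj1]
      have hdiff := hblock.2.2.1
      have hWfin : {n | d n = Lbl.wedge ∧ x n = Lbl.vee}.Finite := by
        refine hdiff.subset ?_
        rintro n ⟨h1, h2⟩; simp [Set.mem_setOf_eq, h1, h2]
      have hVfin : {n | d n = Lbl.vee ∧ x n = Lbl.wedge}.Finite := by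
        refine hdiff.subset ?_
        rintro n ⟨h1, h2⟩; simp [Set.mem_setOf_eq, h1, h2]
      have hWsplit : {n | d n = Lbl.wedge ∧ x n = Lbl.vee} = Wc ∪ Wr := by
        ext n; by_cases h : OnCap C n
        · simp [hWc, hWr, h]
        · simp [hWc, hWr, h]
      have hVsplit : {n | d n = Lbl.vee ∧ x n = Lbl.wedge} = Vc ∪ Vr := by
        ext n; by_cases h : OnCap C n
        · simp [hVc, hVr, h]
        · simp [hVc, hVr, h]
      have hWcfin : Wc.Finite := hWfin.subset (by rw [hWsplit]; exact Set.subset_union_left)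
      have hWrfin : Wr.Finite := hWfin.subset (by rw [hWsplit]; exact Set.subset_union_right)
      have hVcfin : Vc.Finite := hVfin.subset (by rw [hVsplit]; exact Set.subset_union_left)
      have hVrfin : Vr.Finite := hVfin.subset (by rw [hVsplit]; exact Set.subset_union_right)
      have hWdisj : Disjoint Wc Wr := by
        rw [Set.disjoint_left]; rintro n hn hn'; exact hn'.1 hn.1
      have hVdisj : Disjoint Vc Vr := by
        rw [Set.disjoint_left]; rintro n hn hn'; exact hn'.1 hn.1
      have hcards : Wr.ncard = Vr.ncard := by
        have h1 : Wc.ncard + Wr.ncard = Vc.ncard + Vr.ncard := by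
          rw [← Set.ncard_union_eq hWdisj hWcfin hWrfin,
            ← Set.ncard_union_eq hVdisj hVcfin hVrfin, ← hWsplit, ← hVsplit]
          exact hblock.2.2.2
        omega
      -- Wr and Vr cannot both be nonempty
      have hWrempty : Wr = ∅ := by
        by_contra hne
        obtain ⟨a, ha⟩ := Set.nonempty_iff_ne_empty.mpr hne
        have hVrne : Vr.Nonempty := by
          rw [← Set.ncard_pos hVrfin, ← hcards, Set.ncard_pos hWrfin]
          exact ⟨a, ha⟩
        obtain ⟨b, hb⟩ := hVrne
        obtain ⟨hac, hda, hxa⟩ := ha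
        obtain ⟨hbc, hdb, hxb⟩ := hb
        rcases lt_trichotomy a b with h | h | h
        · exact o4 a b h hac hbc (by rw [hda]; rintro (h' | h') <;> exact Lbl.noConfusion h')
            (by rw [hdb]; rintro (h' | h') <;> exact Lbl.noConfusion h') ⟨hxa, hxb⟩
        · subst h; rw [hda] at hdb; exact Lbl.noConfusion hdb
        · exact novw b a h hbc hac hdb hda
      have hVrempty : Vr = ∅ := by
        rw [← Set.ncard_eq_zero hVrfin, ← hcards, Set.ncard_eq_zero hWrfin, hWrempty]
      intro n hn hnt
      have hxn : x n = Lbl.vee ∨ x n = Lbl.wedge := o3 n hn hnt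
      rcases hd : d n with _ | _ | _ | _
      · exact absurd (Or.inl hd) hnt
      · exact absurd (Or.inr hd) hnt
      · rcases hxn with h | h
        · exact h
        · exfalso
          have hmem : n ∈ Vr := ⟨hn, hd, h⟩
          rw [hVrempty] at hmem
          exact hmem
      · rcases hxn with h | h
        · exfalso
          have hmem : n ∈ Wr := ⟨hn, hd, h⟩
          rw [hWrempty] at hmem
          exact hmem
        · exact h
    refine ⟨{p ∈ C | x p.1 = Lbl.wedge}, fun p hp => hp.1, ?_, ?_⟩
    · intro n hn
      by_cases hc : OnCap C n
      · obtain ⟨p, hpC, hp⟩ := hc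
        have hpS : x p.1 ≠ Lbl.wedge := by
          intro hw
          exact hn ⟨p, ⟨hpC, hw⟩, hp⟩
        have hx : x p.1 = Lbl.vee ∧ x p.2 = Lbl.wedge := by
          rcases o2 p hpC with h | h
          · exact h
          · exact absurd h.1 hpS
        rcases hp with rfl | rfl
        · rw [hx.1, (good1 p hpC).2.1]
        · rw [hx.2, (good1 p hpC).2.2]
      · by_cases ht : Triv (d n)
        · exact hblock.1 n ht
        · exact hray n hc ht
    · rintro p ⟨hpC, hw⟩
      refine ⟨hw, ?_⟩
      rcases o2 p hpC with h | h
      · rw [hw] at h; exact absurd h.1 (by simp)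
      · exact h.2
  · -- ∃ S → Oriented
    rintro ⟨S, hSC, h1, h2⟩
    refine ⟨?_, ?_, ?_, ?_⟩
    · intro n hn ht
      rw [h1 n (fun h => hn (onCap_mono hSC h))]
      exact ht
    · intro p hpC
      by_cases hpS : p ∈ S
      · exact Or.inr (h2 p hpS)
      · obtain ⟨hf1, hf2⟩ := hfresh S hSC p hpC hpS
        exact Or.inl ⟨by rw [h1 p.1 hf1, (good1 p hpC).2.1],
          by rw [h1 p.2 hf2, (good1 p hpC).2.2]⟩
    · intro n hn hnt
      rw [h1 n (fun h => hn (onCap_mono hSC h))]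
      rcases hd : d n with _ | _ | _ | _
      · exact absurd (Or.inl hd) hnt
      · exact absurd (Or.inr hd) hnt
      · exact Or.inl rfl
      · exact Or.inr rfl
    · intro m n hmn hm hn _ _ hx
      rw [h1 m (fun h => hm (onCap_mono hSC h)), h1 n (fun h => hn (onCap_mono hSC h))] at hx
      exact novw m n hmn hm hn hx.1 hx.2

/-- For bipartitions `λ, μ` in the same block, `d_{λμ}(q) ≠ 0` (i.e. the
labelled diagram `c_λ x_μ` is oriented) if and only if `x_μ` is obtained from
`x_λ` by reversing the labels at the endpoint pairs of some subset `S` of the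
caps of `c_λ`; and in that case `d_{λμ}(q) = q^{|S|}`, i.e. the degree of
`c_λ x_μ` equals `|S|`. -/
theorem dPoly_ne_zero_iff_flip_subset (δ : ℤ) (lamL lamR muL muR : ℕ → ℕ)
    (hlam : IsBipartition lamL lamR) (hmu : IsBipartition muL muR)
    (C : Set (ℤ × ℤ))
    (hC : IsCapDiagram (diagram (xBipart δ lamL lamR)) C)
    (hblock : SameBlock (diagram (xBipart δ lamL lamR)) (diagram (xBipart δ muL muR))) :
    (Oriented (diagram (xBipart δ lamL lamR)) C (diagram (xBipart δ muL muR)) ↔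
      ∃ S ⊆ C,
        (∀ n : ℤ, ¬ OnCap S n →
          diagram (xBipart δ muL muR) n = diagram (xBipart δ lamL lamR) n) ∧
        (∀ p ∈ S, diagram (xBipart δ muL muR) p.1 = Lbl.wedge ∧
          diagram (xBipart δ muL muR) p.2 = Lbl.vee)) ∧
    (∀ S ⊆ C,
      (∀ n : ℤ, ¬ OnCap S n →
        diagram (xBipart δ muL muR) n = diagram (xBipart δ lamL lamR) n) →
      (∀ p ∈ S, diagram (xBipart δ muL muR) p.1 = Lbl.wedge ∧
        diagram (xBipart δ muL muR) p.2 = Lbl.vee) →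
      clockCount C (diagram (xBipart δ muL muR)) = S.ncard) := by
  exact oriented_main (diagram (xBipart δ lamL lamR)) (diagram (xBipart δ muL muR)) C hC hblock
end

section
/- In the Brauer setting, two elements of A^+ are in the same W-orbit, for W = ⟨(i,j), (i,j)_− : i ≠ j⟩ acting on sequences by place permutations and sign-changing transpositions, if and only if one is obtained from the other by a finite sequence of moves each of which either swaps a ∨ and a ∧ or replaces two ∨'s by two ∧'s (or vice versa), where a ⋄ (the symbol at value 0, if present) may play the role of either ∨ or ∧. -/
/-- The five labels `∘, ×, ∨, ∧, ⋄` of Brauer weight diagrams. -/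
inductive BLbl : Type
  | circ | times | vee | wedge | diam
  deriving DecidableEq

/-- Membership of `x` in `A⁺` for the Brauer algebra: a strictly decreasing
sequence with all entries in `ℤ` or all in `ℤ + 1/2`. -/
def BAplus (x : ℕ → ℚ) : Prop :=
  StrictAnti x ∧
    ((∀ i, ∃ k : ℤ, x i = k) ∨ (∀ i, ∃ k : ℤ, x i = k + 1 / 2))

/-- `I_∧(x) = {x_i : x_i > 0}`. -/
def BIwedge (x : ℕ → ℚ) : Set ℚ := {v | 0 < v ∧ ∃ i, x i = v}

/-- `I_∨(x) = {−x_i : x_i < 0}`. -/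
def BIvee (x : ℕ → ℚ) : Set ℚ := {v | 0 < v ∧ ∃ i, x i = -v}

open Classical in
/-- The Brauer weight diagram of `x`: vertex `n` (in `ℕ ∪ {0}` or `ℕ − 1/2`)
is labelled `∘`, `×`, `∨`, `∧` or `⋄` according to the membership of `n` in
`I_∨(x)` and `I_∧(x)`, with `⋄` at `0` when `0` is an entry of `x`. -/
noncomputable def bdiagram (x : ℕ → ℚ) : ℚ → BLbl := fun n =>
  if n = 0 ∧ ∃ i, x i = 0 then BLbl.diam
  else if n ∈ BIvee x then (if n ∈ BIwedge x then BLbl.times else BLbl.vee)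
  else (if n ∈ BIwedge x then BLbl.wedge else BLbl.circ)

/-- Resolve the wildcard `⋄` as `∨` (if `c`) or as `∧` (otherwise). -/
def resolve (c : Bool) : BLbl → Lbl
  | BLbl.circ => Lbl.circ
  | BLbl.times => Lbl.times
  | BLbl.vee => Lbl.vee
  | BLbl.wedge => Lbl.wedge
  | BLbl.diam => if c then Lbl.vee else Lbl.wedge

/-- An elementary move between (resolved) diagrams: at two vertices, either
swap a `∨` and a `∧`, or replace two `∨`s by two `∧`s, or two `∧`s by two
`∨`s; all other vertices keep their labels. -/
def MoveStep (e f : ℚ → Lbl) : Prop :=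
  ∃ v w : ℚ, v ≠ w ∧ (∀ u, u ≠ v → u ≠ w → f u = e u) ∧
    ((e v = Lbl.vee ∧ e w = Lbl.wedge ∧ f v = Lbl.wedge ∧ f w = Lbl.vee) ∨
     (e v = Lbl.vee ∧ e w = Lbl.vee ∧ f v = Lbl.wedge ∧ f w = Lbl.wedge) ∨
     (e v = Lbl.wedge ∧ e w = Lbl.wedge ∧ f v = Lbl.vee ∧ f w = Lbl.vee))

/-- An elementary move between elements of `A⁺`, where any `⋄` may play the
role of either `∨` or `∧`. -/
def BMove (x y : ℕ → ℚ) : Prop :=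
  BAplus x ∧ BAplus y ∧
    ∃ c c' : Bool, MoveStep (resolve c ∘ bdiagram x) (resolve c' ∘ bdiagram y)

/-- Orbit of the group `W = ⟨(i,j), (i,j)₋⟩` of finitely supported signed
permutations with an even number of sign changes. -/
def SameWOrbitBrauer (x y : ℕ → ℚ) : Prop :=
  ∃ σ : Equiv.Perm ℕ, ∃ ε : ℕ → ℤ,
    (∀ i, ε i = 1 ∨ ε i = -1) ∧
    {i | σ i ≠ i ∨ ε i ≠ 1}.Finite ∧
    Even {i | ε i = -1}.ncard ∧
    (∀ i, x i = (ε i : ℚ) * y (σ i))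

open Set Function Filter

lemma StrictAnti.eq_of_range_eq {f g : ℕ → ℚ} (hf : StrictAnti f) (hg : StrictAnti g)
    (h : range f = range g) : f = g :=
  Set.range_injOn_strictMono (β := ℕ) (γ := ℚᵒᵈ) hf hg h

lemma exists_strictAnti_range_eq {T : Set ℚ} {B : ℚ} (hT : T.Infinite)
    (hB : ∀ q ∈ T, ∃ n : ℕ, q = B - n) :
    ∃ z : ℕ → ℚ, StrictAnti z ∧ range z = T ∧ ∀ i, ∃ n : ℕ, z i = B - n := by
  set p : ℕ → Prop := fun n => B - n ∈ T
  have hTp : T = (fun n : ℕ => B - n) '' Set.ofPred p := by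
    ext q
    constructor
    · intro hq
      obtain ⟨n, rfl⟩ := hB q hq
      exact ⟨n, hq, rfl⟩
    · rintro ⟨n, hn, rfl⟩
      exact hn
  have hp : (Set.ofPred p).Infinite := fun hfin => hT (hTp ▸ hfin.image _)
  refine ⟨fun i => B - Nat.nth p i, fun i j hij => ?_, ?_, fun i => ⟨_, rfl⟩⟩
  · exact sub_lt_sub_left (by exact_mod_cast Nat.nth_strictMono hp hij) B
  · rw [hTp, ← Nat.range_nth_of_infinite hp, ← range_comp]
    rfl

lemma Function.Injective.exists_perm_comp_eq {α : Type*} {f g : ℕ → α} (hf : Injective f)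
    (hg : Injective g) (h : range f = range g) :
    ∃ σ : Equiv.Perm ℕ, (∀ i, g (σ i) = f i) ∧ ∀ i, f i = g i → σ i = i := by
  set σ : Equiv.Perm ℕ :=
    (Equiv.ofInjective f hf).trans ((Equiv.setCongr h).trans (Equiv.ofInjective g hg).symm)
  have hσ : ∀ i, g (σ i) = f i := fun i => Equiv.apply_ofInjective_symm hg _
  exact ⟨σ, hσ, fun i hi => hg (by rw [hσ, hi])⟩

lemma ncard_abs_mem {x : ℕ → ℚ} {S : Finset ℚ}
    (hS : ∀ v ∈ S, ∃! i, |x i| = v) : {i | |x i| ∈ S}.ncard = S.card := by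
  rw [← ncard_coe_finset]
  refine ncard_congr (fun i _ => |x i|) (fun i hi => hi) (fun i j hi _ hij => ?_) fun v hv => ?_
  · obtain ⟨k, -, hk⟩ := hS _ hi
    exact (hk i rfl).trans (hk j hij.symm).symm
  · obtain ⟨i, hi, -⟩ := hS v hv
    exact ⟨i, by rwa [mem_ofPred_eq, hi], hi⟩

lemma even_ncard_iff_prod_eq_one {ε : ℕ → ℤ} {N : ℕ} (hε : ∀ i, ε i = 1 ∨ ε i = -1)
    (hN : ∀ i, N ≤ i → ε i = 1) :
    Even {i | ε i = -1}.ncard ↔ ∏ i ∈ Finset.range N, ε i = 1 := by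
  classical
  set F := (Finset.range N).filter (ε · = -1)
  have hF : {i | ε i = -1} = ↑F := by
    ext i
    simp only [mem_ofPred_eq, F, Finset.coe_filter, Finset.mem_range, iff_and_self]
    exact fun hi => not_le.1 fun hNi => by simp [hN i hNi] at hi
  have hprod : ∏ i ∈ Finset.range N, ε i = (-1) ^ F.card := by
    rw [← Finset.prod_filter_mul_prod_filter_not _ (ε · = -1),
      Finset.prod_congr rfl fun i hi => (Finset.mem_filter.1 hi).2, Finset.prod_const,
      Finset.prod_eq_one fun i hi => (hε i).resolve_right (Finset.mem_filter.1 hi).2, mul_one]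
  rw [hF, ncard_coe_finset, hprod, neg_one_pow_eq_one_iff_even (by decide)]

lemma eq_preimage_of_forall_nonneg {A B : Set ℚ} {f : ℚ → ℚ}
    (h : ∀ u, 0 ≤ u → (u ∈ B ↔ f u ∈ A) ∧ (-u ∈ B ↔ f (-u) ∈ A)) : B = f ⁻¹' A := by
  ext q
  obtain ⟨h1, h2⟩ := h |q| (abs_nonneg q)
  rcases abs_choice q with hq | hq
  · rwa [hq] at h1
  · rwa [hq, neg_neg] at h2

lemma Finset.exists_lt_of_abs_mem (S : Finset ℚ) : ∃ c : ℚ, ∀ q, |q| ∈ S → c < q := by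
  obtain ⟨M, hM⟩ := S.bddAbove
  refine ⟨-|M| - 1, fun q hq => ?_⟩
  linarith [hM hq, neg_abs_le q, le_abs_self M]

section signFlip

variable {S T : Finset ℚ} {q : ℚ}

def signFlip (S : Finset ℚ) (q : ℚ) : ℚ := if |q| ∈ S then -q else q

lemma signFlip_of_mem (h : |q| ∈ S) : signFlip S q = -q := if_pos h

lemma signFlip_of_not_mem (h : |q| ∉ S) : signFlip S q = q := if_neg h

@[simp]
lemma signFlip_zero : signFlip S 0 = 0 := by
  simp [signFlip]

lemma signFlip_involutive (S : Finset ℚ) : Involutive (signFlip S) := fun q => by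
  unfold signFlip; split_ifs <;> simp_all

lemma preimage_signFlip (S : Finset ℚ) (A : Set ℚ) : signFlip S ⁻¹' A = signFlip S '' A :=
  (congrFun (signFlip_involutive S).image_eq_preimage_symm A).symm

lemma signFlip_signFlip_sdiff (hTS : T ⊆ S) :
    signFlip T (signFlip (S \ T) q) = signFlip S q := by
  unfold signFlip
  have := @hTS |q|
  by_cases hT : |q| ∈ T <;> by_cases hS : |q| ∈ S <;> simp_all

lemma signFlip_insert_zero (S : Finset ℚ) : signFlip (insert 0 S) = signFlip S := by
  ext q
  unfold signFlip
  by_cases hq : q = 0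
  · simp [hq]
  · simp [abs_ne_zero.2 hq]

end signFlip

namespace BAplus

variable {x y : ℕ → ℚ}

lemma exists_int_sub (hx : BAplus x) (i j : ℕ) : ∃ k : ℤ, x i - x j = k := by
  rcases hx.2 with h | h <;>
  · obtain ⟨a, ha⟩ := h i
    obtain ⟨b, hb⟩ := h j
    exact ⟨a - b, by rw [ha, hb]; push_cast; ring⟩

lemma exists_int_add (hx : BAplus x) (i j : ℕ) : ∃ k : ℤ, x i + x j = k := by
  rcases hx.2 with h | h
  · obtain ⟨a, ha⟩ := h i
    obtain ⟨b, hb⟩ := h j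
    exact ⟨a + b, by rw [ha, hb]; push_cast; ring⟩
  · obtain ⟨a, ha⟩ := h i
    obtain ⟨b, hb⟩ := h j
    exact ⟨a + b + 1, by rw [ha, hb]; push_cast; ring⟩

lemma add_le_apply_zero (hx : BAplus x) (i : ℕ) : x i + i ≤ x 0 := by
  induction i with
  | zero => simp
  | succ i ih =>
    obtain ⟨k, hk⟩ := hx.exists_int_sub i (i + 1)
    have hpos : (0 : ℚ) < k := hk ▸ sub_pos.2 (hx.1 (Nat.lt_succ_self i))
    have : (1 : ℚ) ≤ k := by exact_mod_cast (show (0 : ℤ) < k by exact_mod_cast hpos)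
    push_cast
    linarith

lemma exists_le_iff_lt (hx : BAplus x) (c : ℚ) : ∃ m : ℕ, ∀ i, c ≤ x i ↔ i < m := by
  have hex : ∃ i, x i < c := by
    obtain ⟨n, hn⟩ := exists_nat_gt (x 0 - c)
    exact ⟨n, by linarith [hx.add_le_apply_zero n]⟩
  refine ⟨Nat.find hex, fun i => ⟨fun hi => ?_, fun hi => not_lt.1 (Nat.find_min hex hi)⟩⟩
  by_contra h
  exact (Nat.find_spec hex).not_ge (hi.trans (hx.1.antitone (not_lt.1 h)))

lemma eq_of_range_eq (hx : BAplus x) (hy : BAplus y) (h : range x = range y) : x = y :=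
  hx.1.eq_of_range_eq hy.1 h

lemma range_inter_Ici {m : ℕ} {c : ℚ} (hm : ∀ i, c ≤ x i ↔ i < m) :
    range x ∩ Ici c = x '' Iio m := by
  ext q
  constructor
  · rintro ⟨⟨i, rfl⟩, hi⟩
    exact ⟨i, (hm i).1 hi, rfl⟩
  · rintro ⟨i, hi, rfl⟩
    exact ⟨⟨i, rfl⟩, (hm i).2 hi⟩

lemma range_add_eq_inter_Iio {m : ℕ} {c : ℚ} (hm : ∀ i, c ≤ x i ↔ i < m) :
    range (fun i => x (m + i)) = range x ∩ Iio c := by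
  ext q
  constructor
  · rintro ⟨i, rfl⟩
    exact ⟨⟨_, rfl⟩, not_le.1 fun h => by have := (hm (m + i)).1 h; omega⟩
  · rintro ⟨⟨i, rfl⟩, hi⟩
    have : m ≤ i := not_lt.1 fun h => (not_le.2 hi) ((hm i).2 h)
    exact ⟨i - m, by simp only [Nat.add_sub_cancel' this]⟩

lemma eventually_eq_of_range_inter (hx : BAplus x) (hy : BAplus y) {c : ℚ}
    (hlow : range x ∩ Iio c = range y ∩ Iio c)
    (hhigh : (range x ∩ Ici c).ncard = (range y ∩ Ici c).ncard) :
    ∀ᶠ i in atTop, x i = y i := by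
  obtain ⟨m, hm⟩ := hx.exists_le_iff_lt c
  obtain ⟨m', hm'⟩ := hy.exists_le_iff_lt c
  have hmm : m = m' := by
    rwa [range_inter_Ici hm, range_inter_Ici hm', ncard_image_of_injective _ hx.1.injective,
      ncard_image_of_injective _ hy.1.injective, Set.ncard_Iio_nat, Set.ncard_Iio_nat] at hhigh
  subst hmm
  have hshift : (fun i => x (m + i)) = fun i => y (m + i) :=
    StrictAnti.eq_of_range_eq (fun i j hij => hx.1 (by omega)) (fun i j hij => hy.1 (by omega))
      (by rw [range_add_eq_inter_Iio hm, range_add_eq_inter_Iio hm', hlow])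
  filter_upwards [eventually_ge_atTop m] with i hi
  simpa [Nat.add_sub_cancel' hi] using congrFun hshift (i - m)

lemma eventually_eq_of_range_eq_preimage_signFlip (hx : BAplus x) (hy : BAplus y)
    {S : Finset ℚ} (h : range y = signFlip S ⁻¹' range x) :
    ∀ᶠ i in atTop, y i = x i ∧ |x i| ∉ S := by
  obtain ⟨c, hc⟩ := S.exists_lt_of_abs_mem
  have hfix : ∀ q, q < c → signFlip S q = q := fun q hq =>
    signFlip_of_not_mem fun hq' => (hc q hq').not_gt hq
  have hIci : ∀ q, c ≤ signFlip S q ↔ c ≤ q := fun q => by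
    by_cases hq : |q| ∈ S
    · rw [signFlip_of_mem hq]
      exact iff_of_true (hc _ (by rwa [abs_neg])).le (hc q hq).le
    · rw [signFlip_of_not_mem hq]
  have hlow : range y ∩ Iio c = range x ∩ Iio c := by
    ext q
    simp only [mem_inter_iff, mem_Iio, h, mem_preimage]
    exact and_congr_left fun hq => by rw [hfix q hq]
  have hhigh : range y ∩ Ici c = signFlip S '' (range x ∩ Ici c) := by
    rw [← preimage_signFlip, h]
    ext q
    simp only [mem_inter_iff, mem_Ici, mem_preimage, hIci]
  obtain ⟨m, hm⟩ := hx.exists_le_iff_lt c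
  filter_upwards [hy.eventually_eq_of_range_inter hx hlow
    (by rw [hhigh, ncard_image_of_injective _ (signFlip_involutive S).injective]),
    eventually_ge_atTop m] with i hyx hi
  exact ⟨hyx, fun hS => by have := (hm i).1 (hc _ hS).le; omega⟩

lemma exists_range_eq (hx : BAplus x) {T : Set ℚ} (hT : T.Infinite) (hTb : BddAbove T)
    (hgrid : ∀ q ∈ T, ∃ k : ℤ, q = x 0 + k) : ∃ z, BAplus z ∧ range z = T := by
  obtain ⟨b, hb⟩ := hTb
  obtain ⟨K, hK⟩ := exists_nat_ge (b - x 0)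
  obtain ⟨z, hz, hzT, hzB⟩ := exists_strictAnti_range_eq (B := x 0 + K) hT fun q hq => by
    obtain ⟨k, rfl⟩ := hgrid q hq
    have hkK : k ≤ (K : ℤ) := by exact_mod_cast (show (k : ℚ) ≤ K by linarith [hb hq])
    obtain ⟨n, hn⟩ := Int.eq_ofNat_of_zero_le (sub_nonneg.2 hkK)
    refine ⟨n, ?_⟩
    have : (K : ℚ) - k = n := by exact_mod_cast hn
    linarith
  refine ⟨z, ⟨hz, ?_⟩, hzT⟩
  rcases hx.2 with h | h
  · obtain ⟨a, ha⟩ := h 0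
    refine Or.inl fun i => ?_
    obtain ⟨n, hn⟩ := hzB i
    exact ⟨a + K - n, by rw [hn, ha]; push_cast; ring⟩
  · obtain ⟨a, ha⟩ := h 0
    refine Or.inr fun i => ?_
    obtain ⟨n, hn⟩ := hzB i
    exact ⟨a + K - n, by rw [hn, ha]; push_cast; ring⟩

lemma exists_range_eq_preimage_signFlip (hx : BAplus x) (S : Finset ℚ) :
    ∃ z, BAplus z ∧ range z = signFlip S ⁻¹' range x := by
  rw [preimage_signFlip, ← range_comp]
  obtain ⟨M, hM⟩ := S.bddAbove
  refine hx.exists_range_eq (infinite_range_of_injective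
    ((signFlip_involutive S).injective.comp hx.1.injective)) ⟨max (x 0) M, ?_⟩ ?_
  · rintro _ ⟨i, rfl⟩
    by_cases hi : |x i| ∈ S
    · rw [comp_apply, signFlip_of_mem hi]
      exact le_max_of_le_right ((neg_le_abs _).trans (hM hi))
    · rw [comp_apply, signFlip_of_not_mem hi]
      exact le_max_of_le_left (hx.1.antitone (Nat.zero_le i))
  · rintro _ ⟨i, rfl⟩
    by_cases hi : |x i| ∈ S
    · obtain ⟨k, hk⟩ := hx.exists_int_add 0 i
      exact ⟨-k, by rw [comp_apply, signFlip_of_mem hi]; push_cast; linarith⟩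
    · obtain ⟨k, hk⟩ := hx.exists_int_sub i 0
      exact ⟨k, by rw [comp_apply, signFlip_of_not_mem hi]; linarith⟩

end BAplus

def IsSignedPerm (σ : Equiv.Perm ℕ) (ε : ℕ → ℤ) (x y : ℕ → ℚ) : Prop :=
  (∀ i, ε i = 1 ∨ ε i = -1) ∧ {i | σ i ≠ i ∨ ε i ≠ 1}.Finite ∧ ∀ i, x i = ε i * y (σ i)

lemma sameWOrbitBrauer_iff {x y : ℕ → ℚ} :
    SameWOrbitBrauer x y ↔ ∃ σ ε, IsSignedPerm σ ε x y ∧ Even {i | ε i = -1}.ncard :=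
  ⟨fun ⟨σ, ε, h1, h2, h3, h4⟩ => ⟨σ, ε, ⟨h1, h2, h4⟩, h3⟩,
    fun ⟨σ, ε, ⟨h1, h2, h4⟩, h3⟩ => ⟨σ, ε, h1, h2, h3, h4⟩⟩

namespace IsSignedPerm

variable {σ τ : Equiv.Perm ℕ} {ε δ : ℕ → ℤ} {x y : ℕ → ℚ}

lemma eventually (h : IsSignedPerm σ ε x y) : ∀ᶠ i in atTop, σ i = i ∧ ε i = 1 := by
  rw [← Nat.cofinite_eq_atTop]
  filter_upwards [h.2.1.eventually_cofinite_notMem] with i hi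
  simpa [not_or] using hi

lemma prod_range (h : IsSignedPerm σ ε x y) {N : ℕ} (hN : ∀ i, N ≤ i → σ i = i) :
    ∏ i ∈ Finset.range N, x i = (∏ i ∈ Finset.range N, (ε i : ℚ)) * ∏ i ∈ Finset.range N, y i := by
  rw [← σ.prod_comp (Finset.range N) y fun i hi => Finset.mem_range.2 (not_le.1 fun hNi => hi
    (hN i hNi)), ← Finset.prod_mul_distrib]
  exact Finset.prod_congr rfl fun i _ => h.2.2 i

/-- Without zero entries the sign product is `∏ xᵢ / ∏ yᵢ` over a long enough range, so it does
not depend on the signed permutation. -/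
lemma even_iff (h : IsSignedPerm σ ε x y) (h' : IsSignedPerm τ δ x y) (hx0 : 0 ∉ range x) :
    Even {i | ε i = -1}.ncard ↔ Even {i | δ i = -1}.ncard := by
  obtain ⟨N, hN⟩ := eventually_atTop.1 (h.eventually.and h'.eventually)
  rw [even_ncard_iff_prod_eq_one h.1 fun i hi => (hN i hi).1.2,
    even_ncard_iff_prod_eq_one h'.1 fun i hi => (hN i hi).2.2]
  have hxy := h.prod_range fun i hi => (hN i hi).1.1
  have hx : ∏ i ∈ Finset.range N, x i ≠ 0 := Finset.prod_ne_zero_iff.2 fun i _ hi => hx0 ⟨i, hi⟩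
  have hy : ∏ i ∈ Finset.range N, y i ≠ 0 := right_ne_zero_of_mul (hxy ▸ hx)
  have : ∏ i ∈ Finset.range N, ε i = ∏ i ∈ Finset.range N, δ i := by
    exact_mod_cast mul_right_cancel₀ hy (hxy.symm.trans (h'.prod_range fun i hi => (hN i hi).2.1))
  rw [this]

lemma eq_or_eq_neg (h : IsSignedPerm σ ε x y) (i : ℕ) : x i = y (σ i) ∨ x i = -y (σ i) := by
  rcases h.1 i with he | he <;> simp [h.2.2 i, he]

lemma eq_or_eq_neg_symm (h : IsSignedPerm σ ε x y) (j : ℕ) :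
    y j = x (σ.symm j) ∨ y j = -x (σ.symm j) := by
  rcases h.eq_or_eq_neg (σ.symm j) with h' | h' <;> rw [Equiv.apply_symm_apply] at h'
  · exact Or.inl h'.symm
  · exact Or.inr (by rw [h', neg_neg])

end IsSignedPerm

lemma sameWOrbitBrauer_refl (x : ℕ → ℚ) : SameWOrbitBrauer x x :=
  ⟨1, fun _ => 1, fun _ => Or.inl rfl, by simp, by simp, fun _ => by simp⟩

lemma SameWOrbitBrauer.trans {x y z : ℕ → ℚ} (hxy : SameWOrbitBrauer x y)
    (hyz : SameWOrbitBrauer y z) : SameWOrbitBrauer x z := by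
  rw [sameWOrbitBrauer_iff] at *
  obtain ⟨σ, ε, h, hε⟩ := hxy
  obtain ⟨τ, δ, h', hδ⟩ := hyz
  obtain ⟨N, hN⟩ := eventually_atTop.1 (h.eventually.and h'.eventually)
  have hσ : ∀ i, N ≤ i → σ i = i := fun i hi => (hN i hi).1.1
  have hsign : ∀ i, ε i * δ (σ i) = 1 ∨ ε i * δ (σ i) = -1 := fun i => by
    rcases h.1 i with h1 | h1 <;> rcases h'.1 (σ i) with h2 | h2 <;> simp [h1, h2]
  have hfix : ∀ i, N ≤ i → ε i * δ (σ i) = 1 := fun i hi => by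
    simp [hσ i hi, (hN i hi).1.2, (hN i hi).2.2]
  refine ⟨σ.trans τ, fun i => ε i * δ (σ i), ⟨hsign, ?_, fun i => ?_⟩, ?_⟩
  · refine (finite_Iio N).subset fun i hi => mem_Iio.2 (not_le.1 fun hNi => ?_)
    simp [hσ i hNi, (hN i hNi).1.2, (hN i hNi).2.1, (hN i hNi).2.2] at hi
  · rw [h.2.2 i, h'.2.2 (σ i), Equiv.trans_apply]
    push_cast
    ring
  · rw [even_ncard_iff_prod_eq_one h.1 fun i hi => (hN i hi).1.2] at hε
    rw [even_ncard_iff_prod_eq_one h'.1 fun i hi => (hN i hi).2.2] at hδ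
    rw [even_ncard_iff_prod_eq_one hsign hfix, Finset.prod_mul_distrib,
      σ.prod_comp _ δ fun i hi => Finset.mem_range.2 (not_le.1 fun hNi => hi (hσ i hNi)), hε, hδ,
      mul_one]

section FlipSet

variable {x y : ℕ → ℚ} {S : Finset ℚ}

/-- `S` is a set of `∨`/`∧` vertices of `x` whose flip turns `x` into `y`. -/
def IsFlipSet (x y : ℕ → ℚ) (S : Finset ℚ) : Prop :=
  (∀ v ∈ S, 0 < v ∧ Xor (v ∈ range x) (-v ∈ range x)) ∧ range y = signFlip S ⁻¹' range x

lemma IsFlipSet.existsUnique_abs_eq (hx : Injective x) (h : IsFlipSet x y S) :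
    ∀ v ∈ S, ∃! i, |x i| = v := by
  intro v hv
  obtain ⟨hv0, hxor⟩ := h.1 v hv
  have hex : ∃ i, |x i| = v := by
    rcases hxor with ⟨⟨i, hi⟩, -⟩ | ⟨⟨i, hi⟩, -⟩
    · exact ⟨i, by rw [hi, abs_of_pos hv0]⟩
    · exact ⟨i, by rw [hi, abs_neg, abs_of_pos hv0]⟩
  have hboth : ¬(v ∈ range x ∧ -v ∈ range x) := by unfold Xor at hxor; tauto
  obtain ⟨i, hi⟩ := hex
  refine ⟨i, hi, fun j hj => ?_⟩
  rcases (abs_eq hv0.le).1 hi with hi' | hi' <;> rcases (abs_eq hv0.le).1 hj with hj' | hj'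
  · exact hx (hj'.trans hi'.symm)
  · exact absurd ⟨⟨i, hi'⟩, ⟨j, hj'⟩⟩ hboth
  · exact absurd ⟨⟨j, hj'⟩, ⟨i, hi'⟩⟩ hboth
  · exact hx (hj'.trans hi'.symm)

lemma exists_isSignedPerm_of_range_eq (hx : BAplus x) (hy : BAplus y)
    (h : range y = signFlip S ⁻¹' range x) (hS : ∀ v ∈ S, ∃! i, |x i| = v) :
    ∃ σ ε, IsSignedPerm σ ε x y ∧ {i | ε i = -1}.ncard = S.card := by
  classical
  obtain ⟨σ, hσ, hσfix⟩ :=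
    ((signFlip_involutive S).injective.comp hx.1.injective).exists_perm_comp_eq
      hy.1.injective (by rw [range_comp, ← preimage_signFlip, h])
  set ε : ℕ → ℤ := fun i => if |x i| ∈ S then -1 else 1
  have hε : {i | ε i = -1} = {i | |x i| ∈ S} := by
    ext i
    by_cases hi : |x i| ∈ S <;> simp [ε, hi]
  refine ⟨σ, ε, ⟨fun i => ?_, ?_, fun i => ?_⟩, by rw [hε, ncard_abs_mem hS]⟩
  · by_cases hi : |x i| ∈ S <;> simp [ε, hi]
  · have hfin := eventually_cofinite.1 <| Nat.cofinite_eq_atTop ▸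
      hx.eventually_eq_of_range_eq_preimage_signFlip hy h
    refine hfin.subset fun i hi ⟨hyx, hxS⟩ => ?_
    have : σ i = i := hσfix i (by rw [comp_apply, signFlip_of_not_mem hxS, hyx])
    simp [ε, this, hxS] at hi
  · rw [hσ i, comp_apply]
    by_cases hi : |x i| ∈ S <;> simp [ε, hi, signFlip_of_mem, signFlip_of_not_mem]

lemma sameWOrbitBrauer_of_isFlipSet (hx : BAplus x) (hy : BAplus y) (h : IsFlipSet x y S)
    (hpar : 0 ∈ range x ∨ Even S.card) : SameWOrbitBrauer x y := by
  rw [sameWOrbitBrauer_iff]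
  by_cases heven : Even S.card
  · obtain ⟨σ, ε, hrep, hcard⟩ :=
      exists_isSignedPerm_of_range_eq hx hy h.2 (h.existsUnique_abs_eq hx.1.injective)
    exact ⟨σ, ε, hrep, hcard ▸ heven⟩
  -- with a zero entry, an odd flip set is completed by the vertex `0`
  obtain ⟨i₀, hi₀⟩ := hpar.resolve_right heven
  have h0S : (0 : ℚ) ∉ S := fun h0 => (h.1 0 h0).1.false
  obtain ⟨σ, ε, hrep, hcard⟩ := exists_isSignedPerm_of_range_eq (S := insert 0 S) hx hy
    (by rw [signFlip_insert_zero, h.2]) fun v hv => by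
      rcases Finset.mem_insert.1 hv with rfl | hv
      · exact ⟨i₀, by simp [hi₀], fun j hj => hx.1.injective (by simp_all)⟩
      · exact h.existsUnique_abs_eq hx.1.injective v hv
  rw [Finset.card_insert_of_notMem h0S] at hcard
  exact ⟨σ, ε, hrep, hcard ▸ (Nat.not_even_iff_odd.1 heven).add_one⟩

lemma neg_mem_sdiff_of_mem_sdiff {σ : ℕ → ℕ} (hσ : Injective σ) (hy : Injective y)
    (hxy : ∀ i, x i = y (σ i) ∨ x i = -y (σ i)) {q : ℚ} (hq : q ∈ range x \ range y) :
    q ≠ 0 ∧ -q ∈ range y \ range x := by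
  obtain ⟨⟨i, rfl⟩, hqy⟩ := hq
  have hi : x i = -y (σ i) := (hxy i).resolve_left fun h => hqy ⟨σ i, h.symm⟩
  have h0 : x i ≠ 0 := fun h0 => hqy ⟨σ i, by linarith⟩
  refine ⟨h0, ⟨σ i, by linarith⟩, fun ⟨j, hj⟩ => ?_⟩
  rcases hxy j with hj' | hj'
  · have : σ j = σ i := hy (by linarith)
    rw [hσ this] at hj
    exact h0 (by linarith)
  · exact hqy ⟨σ j, by linarith⟩

lemma exists_isFlipSet_of_isSignedPerm (hx : Injective x) (hy : Injective y)
    {σ : Equiv.Perm ℕ} {ε : ℕ → ℤ} (h : IsSignedPerm σ ε x y) : ∃ S, IsFlipSet x y S := by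
  have key := fun q => neg_mem_sdiff_of_mem_sdiff σ.injective hy h.eq_or_eq_neg (q := q)
  have key' := fun q => neg_mem_sdiff_of_mem_sdiff σ.symm.injective hx h.eq_or_eq_neg_symm (q := q)
  have hfin : (range x \ range y).Finite := by
    refine (h.2.1.image x).subset ?_
    rintro _ ⟨⟨i, rfl⟩, hqy⟩
    refine ⟨i, not_and_or.1 fun hi => hqy ⟨i, ?_⟩, rfl⟩
    rw [h.2.2 i, hi.1, hi.2, Int.cast_one, one_mul]
  set S := (hfin.image abs).toFinset
  have hmemS : ∀ q, |q| ∈ S ↔ q ∈ range x \ range y ∨ q ∈ range y \ range x := fun q => by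
    simp only [S, Finite.mem_toFinset, mem_image, abs_eq_abs]
    constructor
    · rintro ⟨p, hp, rfl | rfl⟩
      · exact Or.inl hp
      · exact Or.inr (by simpa using (key _ hp).2)
    · rintro (hq | hq)
      · exact ⟨q, hq, Or.inl rfl⟩
      · exact ⟨-q, (key' q hq).2, Or.inr rfl⟩
  refine ⟨S, fun v hv => ?_, ?_⟩
  · obtain ⟨p, hp, rfl⟩ : ∃ p ∈ range x \ range y, |p| = v := by simpa [S] using hv
    refine ⟨abs_pos.2 (key p hp).1, ?_⟩
    rcases abs_choice p with hab | hab <;> rw [hab]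
    · exact Or.inl ⟨hp.1, (key p hp).2.2⟩
    · exact Or.inr ⟨by rw [neg_neg]; exact hp.1, (key p hp).2.2⟩
  · ext q
    rw [mem_preimage]
    by_cases hq : |q| ∈ S
    · rw [signFlip_of_mem hq]
      rcases (hmemS q).1 hq with hq' | hq'
      · exact iff_of_false hq'.2 (key q hq').2.2
      · exact iff_of_true hq'.1 (key' q hq').2.1
    · rw [signFlip_of_not_mem hq]
      rw [hmemS, Set.mem_sdiff, Set.mem_sdiff] at hq
      tauto

lemma IsFlipSet.even_card (hx : BAplus x) (hy : BAplus y) (h : IsFlipSet x y S)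
    {σ : Equiv.Perm ℕ} {ε : ℕ → ℤ} (hrep : IsSignedPerm σ ε x y)
    (heven : Even {i | ε i = -1}.ncard) (hx0 : 0 ∉ range x) : Even S.card := by
  obtain ⟨τ, δ, hrep', hcard⟩ :=
    exists_isSignedPerm_of_range_eq hx hy h.2 (h.existsUnique_abs_eq hx.1.injective)
  rwa [← hcard, ← hrep.even_iff hrep' hx0]

lemma exists_isFlipSet_of_sameWOrbitBrauer (hx : BAplus x) (hy : BAplus y)
    (h : SameWOrbitBrauer x y) : ∃ S, IsFlipSet x y S ∧ (0 ∈ range x ∨ Even S.card) := by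
  obtain ⟨σ, ε, hrep, heven⟩ := sameWOrbitBrauer_iff.1 h
  obtain ⟨S, hS⟩ := exists_isFlipSet_of_isSignedPerm hx.1.injective hy.1.injective hrep
  exact ⟨S, hS, or_iff_not_imp_left.2 (hS.even_card hx hy hrep heven)⟩

end FlipSet

section Diagram

variable {x y z : ℕ → ℚ} {u : ℚ}

lemma bdiagram_of_neg (hu : u < 0) : bdiagram x u = BLbl.circ := by
  simp [bdiagram, BIvee, BIwedge, hu.ne, hu.not_gt]

open Classical in
lemma bdiagram_zero : bdiagram x 0 = if 0 ∈ range x then BLbl.diam else BLbl.circ := by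
  simp [bdiagram, BIvee, BIwedge, mem_range]

open Classical in
lemma bdiagram_of_pos (hu : 0 < u) :
    bdiagram x u = if -u ∈ range x then (if u ∈ range x then BLbl.times else BLbl.vee)
      else (if u ∈ range x then BLbl.wedge else BLbl.circ) := by
  simp [bdiagram, BIvee, BIwedge, mem_range, hu, hu.ne', eq_comm]

lemma bdiagram_congr (h : u ∈ range y ↔ u ∈ range x) (hneg : -u ∈ range y ↔ -u ∈ range x) :
    bdiagram y u = bdiagram x u := by
  rcases lt_trichotomy u 0 with hu | rfl | hu
  · rw [bdiagram_of_neg hu, bdiagram_of_neg hu]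
  · rw [bdiagram_zero, bdiagram_zero]
    split_ifs <;> simp_all
  · rw [bdiagram_of_pos hu, bdiagram_of_pos hu]
    split_ifs <;> simp_all

lemma resolve_bdiagram_of_ne_zero (hu : u ≠ 0) (c c' : Bool) :
    resolve c (bdiagram x u) = resolve c' (bdiagram x u) := by
  rcases hu.lt_or_gt with hu | hu
  · rw [bdiagram_of_neg hu]; rfl
  · rw [bdiagram_of_pos hu]; split_ifs <;> rfl

lemma resolve_bdiagram_eq_wedge (hu : 0 < u) (c : Bool) :
    resolve c (bdiagram x u) = Lbl.wedge ↔ u ∈ range x ∧ -u ∉ range x := by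
  rw [bdiagram_of_pos hu]; split_ifs <;> simp_all [resolve]

lemma resolve_bdiagram_eq_vee (hu : 0 < u) (c : Bool) :
    resolve c (bdiagram x u) = Lbl.vee ↔ -u ∈ range x ∧ u ∉ range x := by
  rw [bdiagram_of_pos hu]; split_ifs <;> simp_all [resolve]

lemma mem_range_iff_of_resolve_bdiagram_eq (hu : 0 ≤ u) {c c' : Bool}
    (h : resolve c (bdiagram x u) = resolve c' (bdiagram y u)) :
    (u ∈ range y ↔ u ∈ range x) ∧ (-u ∈ range y ↔ -u ∈ range x) := by
  rcases hu.eq_or_lt with rfl | hu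
  · rw [bdiagram_zero, bdiagram_zero] at h
    rw [neg_zero, and_self]
    split_ifs at h <;> cases c <;> cases c' <;> simp_all [resolve]
  · rw [bdiagram_of_pos hu, bdiagram_of_pos hu] at h
    split_ifs at h <;> simp_all [resolve]

end Diagram

def IsSwap (a b : Lbl) : Prop :=
  a = Lbl.vee ∧ b = Lbl.wedge ∨ a = Lbl.wedge ∧ b = Lbl.vee

lemma moveStep_iff {e f : ℚ → Lbl} :
    MoveStep e f ↔ ∃ v w, v ≠ w ∧ (∀ u, u ≠ v → u ≠ w → f u = e u) ∧
      IsSwap (e v) (f v) ∧ IsSwap (e w) (f w) := by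
  constructor
  · rintro ⟨v, w, hvw, hout, ⟨h1, h2, h3, h4⟩ | ⟨h1, h2, h3, h4⟩ | ⟨h1, h2, h3, h4⟩⟩
    · exact ⟨v, w, hvw, hout, Or.inl ⟨h1, h3⟩, Or.inr ⟨h2, h4⟩⟩
    · exact ⟨v, w, hvw, hout, Or.inl ⟨h1, h3⟩, Or.inl ⟨h2, h4⟩⟩
    · exact ⟨v, w, hvw, hout, Or.inr ⟨h1, h3⟩, Or.inr ⟨h2, h4⟩⟩
  · rintro ⟨v, w, hvw, hout, ⟨h1, h3⟩ | ⟨h1, h3⟩, ⟨h2, h4⟩ | ⟨h2, h4⟩⟩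
    · exact ⟨v, w, hvw, hout, Or.inr (Or.inl ⟨h1, h2, h3, h4⟩)⟩
    · exact ⟨v, w, hvw, hout, Or.inl ⟨h1, h2, h3, h4⟩⟩
    · exact ⟨w, v, hvw.symm, fun u hw hv => hout u hv hw, Or.inl ⟨h2, h1, h4, h3⟩⟩
    · exact ⟨v, w, hvw, hout, Or.inr (Or.inr ⟨h1, h2, h3, h4⟩)⟩

lemma isSwap_resolve_bdiagram_iff {x y : ℕ → ℚ} {u : ℚ} {c c' : Bool} :
    IsSwap (resolve c (bdiagram x u)) (resolve c' (bdiagram y u)) ↔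
      (u = 0 ∧ 0 ∈ range x ∧ 0 ∈ range y ∧ c ≠ c') ∨
      (0 < u ∧ Xor (u ∈ range x) (-u ∈ range x) ∧
        (u ∈ range y ↔ -u ∈ range x) ∧ (-u ∈ range y ↔ u ∈ range x)) := by
  rcases lt_trichotomy u 0 with hu | rfl | hu
  · simp [bdiagram_of_neg hu, IsSwap, resolve, hu.ne, hu.not_gt]
  · rw [bdiagram_zero, bdiagram_zero]
    split_ifs <;> cases c <;> cases c' <;> simp_all [IsSwap, resolve]
  · rw [IsSwap, resolve_bdiagram_eq_wedge hu, resolve_bdiagram_eq_wedge hu,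
      resolve_bdiagram_eq_vee hu, resolve_bdiagram_eq_vee hu]
    simp only [hu, hu.ne', false_and, true_and, false_or, Xor]
    tauto

section Moves

variable {x y z : ℕ → ℚ} {S T : Finset ℚ}

lemma bdiagram_eq_of_not_mem (hz : range z = signFlip T ⁻¹' range x)
    {u : ℚ} (hu : u ∉ T) : bdiagram z u = bdiagram x u := by
  rcases lt_or_ge u 0 with hneg | hnn
  · rw [bdiagram_of_neg hneg, bdiagram_of_neg hneg]
  have hu' : |u| ∉ T := by rwa [abs_of_nonneg hnn]
  refine bdiagram_congr ?_ ?_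
  · rw [hz, mem_preimage, signFlip_of_not_mem hu']
  · rw [hz, mem_preimage, signFlip_of_not_mem (by rwa [abs_neg])]

lemma isSwap_of_mem (hz : range z = signFlip T ⁻¹' range x) {v : ℚ} (hvT : v ∈ T)
    (hv : 0 < v ∧ Xor (v ∈ range x) (-v ∈ range x)) (c c' : Bool) :
    IsSwap (resolve c (bdiagram x v)) (resolve c' (bdiagram z v)) := by
  refine isSwap_resolve_bdiagram_iff.2 (Or.inr ⟨hv.1, hv.2, ?_, ?_⟩)
  · rw [hz, mem_preimage, signFlip_of_mem (by rwa [abs_of_pos hv.1])]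
  · rw [hz, mem_preimage, signFlip_of_mem (by rwa [abs_neg, abs_of_pos hv.1]), neg_neg]

lemma bMove_of_pair (hx : BAplus x) (hz : BAplus z) {v w : ℚ} (hvw : v ≠ w)
    (hv : 0 < v ∧ Xor (v ∈ range x) (-v ∈ range x))
    (hw : 0 < w ∧ Xor (w ∈ range x) (-w ∈ range x))
    (hzx : range z = signFlip {v, w} ⁻¹' range x) : BMove x z := by
  refine ⟨hx, hz, true, true, moveStep_iff.2 ⟨v, w, hvw, fun u huv huw => ?_,
    isSwap_of_mem hzx (by simp) hv _ _, isSwap_of_mem hzx (by simp) hw _ _⟩⟩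
  simp only [comp_apply, bdiagram_eq_of_not_mem hzx (by simp [huv, huw] : u ∉ _)]

/-- A single `∨`/`∧` vertex is flipped together with the `⋄`. -/
lemma bMove_of_single (hx : BAplus x) (hz : BAplus z) {v : ℚ}
    (hv : 0 < v ∧ Xor (v ∈ range x) (-v ∈ range x)) (h0 : 0 ∈ range x)
    (hzx : range z = signFlip {v} ⁻¹' range x) : BMove x z := by
  have h0z : 0 ∈ range z := by rwa [hzx, mem_preimage, signFlip_zero]
  refine ⟨hx, hz, true, false, moveStep_iff.2 ⟨v, 0, hv.1.ne', fun u huv hu0 => ?_,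
    isSwap_of_mem hzx (by simp) hv _ _,
    isSwap_resolve_bdiagram_iff.2 (Or.inl ⟨rfl, h0, h0z, by decide⟩)⟩⟩
  simp only [comp_apply, bdiagram_eq_of_not_mem hzx (by simp [huv] : u ∉ _)]
  exact resolve_bdiagram_of_ne_zero hu0 _ _

lemma IsFlipSet.sdiff (h : IsFlipSet x y S) (hTS : T ⊆ S) (hz : range z = signFlip T ⁻¹' range x) :
    IsFlipSet z y (S \ T) := by
  refine ⟨fun u hu => ?_, ?_⟩
  · obtain ⟨huS, huT⟩ := Finset.mem_sdiff.1 hu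
    obtain ⟨hu0, hxor⟩ := h.1 u huS
    refine ⟨hu0, ?_⟩
    rwa [hz, mem_preimage, mem_preimage, signFlip_of_not_mem (by rwa [abs_of_pos hu0]),
      signFlip_of_not_mem (by rwa [abs_neg, abs_of_pos hu0])]
  · ext q
    rw [h.2, hz, mem_preimage, mem_preimage, mem_preimage, signFlip_signFlip_sdiff hTS]

lemma reflTransGen_bMove_of_isFlipSet (hx : BAplus x) (hy : BAplus y) (h : IsFlipSet x y S)
    (hpar : 0 ∈ range x ∨ Even S.card) : Relation.ReflTransGen BMove x y := by
  induction S using Finset.strongInduction generalizing x with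
  | H S ih =>
  rcases Nat.lt_or_ge S.card 2 with hS | hS
  · rcases Nat.lt_succ_iff.1 hS |>.eq_or_lt with hS | hS
    · obtain ⟨v, rfl⟩ := Finset.card_eq_one.1 hS
      obtain h0 := hpar.resolve_right (by simp)
      exact .single (bMove_of_single hx hy (h.1 v (by simp)) h0 h.2)
    · obtain rfl := Finset.card_eq_zero.1 (Nat.lt_one_iff.1 hS)
      have : range y = range x := by
        rw [h.2]
        ext q
        simp [signFlip]
      rw [hy.eq_of_range_eq hx this]
  · obtain ⟨v, hv, w, hw, hvw⟩ := Finset.one_lt_card.1 hS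
    have hTS : {v, w} ⊆ S := Finset.insert_subset hv (Finset.singleton_subset_iff.2 hw)
    obtain ⟨z, hz, hzx⟩ := hx.exists_range_eq_preimage_signFlip {v, w}
    refine .head (bMove_of_pair hx hz hvw (h.1 v hv) (h.1 w hw) hzx)
      (ih _ (Finset.sdiff_ssubset hTS (by simp)) hz (h.sdiff hTS hzx) ?_)
    rw [hzx, mem_preimage, signFlip_zero, Finset.card_sdiff_of_subset hTS,
      Finset.card_pair hvw, Nat.even_sub hS]
    simpa using hpar

end Moves

lemma exists_isFlipSet_of_bMove {x y : ℕ → ℚ} (h : BMove x y) :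
    ∃ S, IsFlipSet x y S ∧ (0 ∈ range x ∨ Even S.card) := by
  classical
  obtain ⟨-, -, c, c', hstep⟩ := h
  obtain ⟨v, w, hvw, hout, hv, hw⟩ := moveStep_iff.1 hstep
  simp only [comp_apply] at hout hv hw
  have hswap : ∀ u, u = v ∨ u = w →
      IsSwap (resolve c (bdiagram x u)) (resolve c' (bdiagram y u)) := by
    rintro u (rfl | rfl) <;> assumption
  set S := ({v, w} : Finset ℚ).filter (0 < ·)
  have hmemS : ∀ u, u ∈ S ↔ (u = v ∨ u = w) ∧ 0 < u := by simp [S]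
  have hloc : ∀ u, 0 ≤ u → (u ∈ range y ↔ signFlip S u ∈ range x) ∧
      (-u ∈ range y ↔ signFlip S (-u) ∈ range x) := by
    intro u hu
    by_cases huvw : u = v ∨ u = w
    · rcases isSwap_resolve_bdiagram_iff.1 (hswap u huvw) with
        ⟨rfl, h0x, h0y, -⟩ | ⟨hu0, -, h1, h2⟩
      · simp [h0x, h0y]
      · have huS : u ∈ S := (hmemS u).2 ⟨huvw, hu0⟩
        rw [signFlip_of_mem (by rwa [abs_of_pos hu0]),
          signFlip_of_mem (by rwa [abs_neg, abs_of_pos hu0]), neg_neg]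
        exact ⟨h1, h2⟩
    · rw [not_or] at huvw
      have huS : |u| ∉ S := by rw [abs_of_nonneg hu, hmemS]; tauto
      rw [signFlip_of_not_mem huS, signFlip_of_not_mem (by rwa [abs_neg])]
      exact mem_range_iff_of_resolve_bdiagram_eq hu (hout u huvw.1 huvw.2).symm
  refine ⟨S, ⟨fun u hu => ?_, eq_preimage_of_forall_nonneg hloc⟩,
    or_iff_not_imp_left.2 fun h0 => ?_⟩
  · obtain ⟨huvw, hu0⟩ := (hmemS u).1 hu
    rcases isSwap_resolve_bdiagram_iff.1 (hswap u huvw) with ⟨rfl, -⟩ | ⟨-, hxor, -⟩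
    · exact absurd hu0 (lt_irrefl 0)
    · exact ⟨hu0, hxor⟩
  · have hpos : ∀ u, u = v ∨ u = w → 0 < u := fun u hu => by
      rcases isSwap_resolve_bdiagram_iff.1 (hswap u hu) with ⟨-, h0x, -⟩ | ⟨hu0, -⟩
      · exact absurd h0x h0
      · exact hu0
    have hS : S = {v, w} := Finset.filter_true_of_mem fun u hu => hpos u (by simpa using hu)
    rw [hS, Finset.card_pair hvw]
    exact even_two

/-- Two elements of `A⁺` (Brauer setting) lie in the same `W`-orbit if and
only if one is obtained from the other by a finite sequence of elementary
moves, each swapping a `∨` and a `∧` or exchanging a pair `∨∨ ↔ ∧∧`, with `⋄`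
allowed to play the role of either `∨` or `∧`. -/
theorem sameWOrbitBrauer_iff_moves (x y : ℕ → ℚ)
    (hx : BAplus x) (hy : BAplus y) :
    SameWOrbitBrauer x y ↔ Relation.ReflTransGen BMove x y := by
  constructor
  · intro h
    obtain ⟨S, hS, hpar⟩ := exists_isFlipSet_of_sameWOrbitBrauer hx hy h
    exact reflTransGen_bMove_of_isFlipSet hx hy hS hpar
  · intro h
    induction h with
    | refl => exact sameWOrbitBrauer_refl x
    | tail _ hmove ih =>
      obtain ⟨S, hS, hpar⟩ := exists_isFlipSet_of_bMove hmove
      exact (ih hmove.1).trans (sameWOrbitBrauer_of_isFlipSet hmove.1 hmove.2.1 hS hpar)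
end

section
/- (Recursion at a wall) In the setting where λ⁺, λ⁻ are separated weights corresponding to a small cap whose two vertices, labelled (∨,∧) in x_{λ⁺} and (∧,∨) in x_{λ⁻}, sit at adjacent positions, one has for all weights μ⁺, μ⁻ in the block that differ only in the same two positions: d_{λ⁺μ⁺}(q) = q^{−1} d_{λ⁻μ⁺}(q) + d_{λ⁻μ⁻}(q) and d_{λ⁺μ⁻}(q) = q d_{λ⁻μ⁻}(q) + d_{λ⁻μ⁺}(q). -/
open Classical in
/-- The polynomial `d_{λμ}(q)` (as a Laurent polynomial in `q`): it is
`q^{deg(c_λ x_μ)}` if `λ, μ` are in the same block and `c_λ x_μ` is oriented,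
and `0` otherwise.  Here `d` is the diagram of `x_λ`, `C` its cap diagram and
`x` the diagram of `x_μ`. -/
noncomputable def dPol (d : ℤ → Lbl) (C : Set (ℤ × ℤ)) (x : ℤ → Lbl) :
    LaurentPolynomial ℤ :=
  if SameBlock d x ∧ Oriented d C x then LaurentPolynomial.T (clockCount C x)
  else 0

/-!
The cap diagram of `λ⁻` differs from that of `λ⁺` only near the wall. If the small cap
`(i - 1, i)` lies under other caps and `(a, b)` is the innermost of them, the caps `(a, b)` and
`(i - 1, i)` become `(a, i - 1)` and `(i, b)`. Otherwise the `∧` at `i - 1` is capped with the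
nearest free `∨` on its left, or else the `∨` at `i` with the nearest free `∧` on its right (the
mirror image of the previous case), or else both become rays. Each candidate is checked to be a
non-crossing saturated matching, and such a matching is unique.

Comparing labels cap by cap then shows that `μ⁺` orients `c_{λ⁺}` exactly when one of `μ⁺`, `μ⁻`
orients `c_{λ⁻}` (never both), `μ⁺` with one clockwise cap more and `μ⁻` with as many; and that
`μ⁻` orients `c_{λ⁺}` exactly when `μ⁺` does, with one clockwise cap more, the small cap. In the
last case the rays of `c_{λ⁺}` keep their labels because, within a block, label changes on rays
balance. The two identities follow.
-/

lemma injOn_insert_of_notMem_image {α β : Type*} {f : α → β} {s : Set α} {a : α}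
    (h : Set.InjOn f s) (ha : f a ∉ f '' s) : Set.InjOn f (insert a s) :=
  (Set.injOn_insert fun has => ha ⟨a, has, rfl⟩).2 ⟨h, ha⟩

@[simp] lemma not_triv_vee : ¬ Triv Lbl.vee := by simp [Triv]

@[simp] lemma not_triv_wedge : ¬ Triv Lbl.wedge := by simp [Triv]

lemma not_triv_iff {s : Lbl} : ¬ Triv s ↔ s = Lbl.vee ∨ s = Lbl.wedge := by
  cases s <;> simp [Triv]

lemma onCap_insert {p : ℤ × ℤ} {C : Set (ℤ × ℤ)} {n : ℤ} :
    OnCap (insert p C) n ↔ (p.1 = n ∨ p.2 = n) ∨ OnCap C n := by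
  simp [OnCap]

lemma OnCap.mono {C C' : Set (ℤ × ℤ)} (h : C ⊆ C') {n : ℤ} (hn : OnCap C n) : OnCap C' n :=
  let ⟨q, hq, hqn⟩ := hn; ⟨q, h hq, hqn⟩

lemma onCap_of_mem {C : Set (ℤ × ℤ)} {p : ℤ × ℤ} (hp : p ∈ C) {n : ℤ}
    (hn : n = p.1 ∨ n = p.2) : OnCap C n :=
  ⟨p, hp, hn.imp Eq.symm Eq.symm⟩

/-- The invariants of a partial run of the cap construction. -/
structure IsNestedCaps (d : ℤ → Lbl) (C : Set (ℤ × ℤ)) : Prop where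
  lt : ∀ p ∈ C, p.1 < p.2
  fst_vee : ∀ p ∈ C, d p.1 = Lbl.vee
  snd_wedge : ∀ p ∈ C, d p.2 = Lbl.wedge
  injOn_fst : Set.InjOn Prod.fst C
  injOn_snd : Set.InjOn Prod.snd C
  noncrossing : ∀ p ∈ C, ∀ q ∈ C, p.1 < q.1 → q.1 < p.2 → q.2 < p.2
  covered : ∀ p ∈ C, ∀ k, p.1 < k → k < p.2 → ¬ Triv (d k) → OnCap C k

structure IsCapMatching (d : ℤ → Lbl) (C : Set (ℤ × ℤ)) : Prop extends IsNestedCaps d C where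
  saturated : ∀ m n, m < n → d m = Lbl.vee → d n = Lbl.wedge → ¬ OnCap C m → ¬ OnCap C n →
    False

namespace IsNestedCaps

variable {d : ℤ → Lbl} {C : Set (ℤ × ℤ)}

lemma empty : IsNestedCaps d ∅ := by
  constructor <;> simp

lemma eq_of_fst_eq (h : IsNestedCaps d C) {p q : ℤ × ℤ} (hp : p ∈ C) (hq : q ∈ C)
    (he : p.1 = q.1) : p = q :=
  h.injOn_fst hp hq he

lemma eq_of_snd_eq (h : IsNestedCaps d C) {p q : ℤ × ℤ} (hp : p ∈ C) (hq : q ∈ C)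
    (he : p.2 = q.2) : p = q :=
  h.injOn_snd hp hq he

lemma fst_ne_snd (h : IsNestedCaps d C) {p q : ℤ × ℤ} (hp : p ∈ C) (hq : q ∈ C) :
    p.1 ≠ q.2 := by
  intro he
  have h1 := h.fst_vee p hp
  rw [he, h.snd_wedge q hq] at h1
  exact Lbl.noConfusion h1

lemma eq_of_endpoint (h : IsNestedCaps d C) {p q : ℤ × ℤ} (hp : p ∈ C) (hq : q ∈ C) {n : ℤ}
    (hpn : n = p.1 ∨ n = p.2) (hqn : n = q.1 ∨ n = q.2) : p = q := by
  rcases hpn with rfl | rfl <;> rcases hqn with he | he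
  · exact h.eq_of_fst_eq hp hq he
  · exact absurd he (h.fst_ne_snd hp hq)
  · exact absurd he.symm (h.fst_ne_snd hq hp)
  · exact h.eq_of_snd_eq hp hq he

lemma endpoints_ne (h : IsNestedCaps d C) {p q : ℤ × ℤ} (hp : p ∈ C) (hq : q ∈ C) (hpq : p ≠ q) :
    p.1 ≠ q.1 ∧ p.1 ≠ q.2 ∧ p.2 ≠ q.1 ∧ p.2 ≠ q.2 :=
  ⟨fun he => hpq (h.eq_of_endpoint hp hq (Or.inl rfl) (Or.inl he)),
    fun he => hpq (h.eq_of_endpoint hp hq (Or.inl rfl) (Or.inr he)),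
    fun he => hpq (h.eq_of_endpoint hp hq (Or.inr rfl) (Or.inl he)),
    fun he => hpq (h.eq_of_endpoint hp hq (Or.inr rfl) (Or.inr he))⟩

lemma exists_fst_eq_of_vee (h : IsNestedCaps d C) {n : ℤ} (hn : OnCap C n)
    (hd : d n = Lbl.vee) : ∃ p ∈ C, p.1 = n := by
  obtain ⟨p, hp, h1 | h2⟩ := hn
  · exact ⟨p, hp, h1⟩
  · have := h.snd_wedge p hp
    rw [h2, hd] at this
    exact Lbl.noConfusion this

lemma exists_snd_eq_of_wedge (h : IsNestedCaps d C) {n : ℤ} (hn : OnCap C n)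
    (hd : d n = Lbl.wedge) : ∃ p ∈ C, p.2 = n := by
  obtain ⟨p, hp, h1 | h2⟩ := hn
  · have := h.fst_vee p hp
    rw [h1, hd] at this
    exact Lbl.noConfusion this
  · exact ⟨p, hp, h2⟩

lemma noncrossing_snd (h : IsNestedCaps d C) {p q : ℤ × ℤ} (hp : p ∈ C) (hq : q ∈ C)
    (h1 : p.1 < q.2) (h2 : q.2 < p.2) : p.1 < q.1 := by
  have hq12 := h.lt q hq
  by_contra! hle
  rcases hle.lt_or_eq with hlt | heq
  · have := h.noncrossing q hq p hp hlt (by omega)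
    omega
  · obtain rfl := h.eq_of_fst_eq hq hp heq
    omega

lemma nested (h : IsNestedCaps d C) {p : ℤ × ℤ} (hp : p ∈ C) {k : ℤ} (h1 : p.1 < k)
    (h2 : k < p.2) (hk : ¬ Triv (d k)) :
    ∃ q ∈ C, p.1 < q.1 ∧ q.2 < p.2 ∧ (k = q.1 ∨ k = q.2) := by
  obtain ⟨q, hq, hkq⟩ := h.covered p hp k h1 h2 hk
  have hq12 := h.lt q hq
  refine ⟨q, hq, ?_, ?_, hkq.imp Eq.symm Eq.symm⟩ <;> rcases hkq with rfl | rfl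
  · exact h1
  · exact h.noncrossing_snd hp hq h1 h2
  · exact h.noncrossing p hp q hq h1 h2
  · exact h2

lemma insert_validPair (h : IsNestedCaps d C) {a b : ℤ} (hv : ValidPair d C a b) :
    IsNestedCaps d (insert (a, b) C) := by
  obtain ⟨hab, hda, hdb, hna, hnb, hint⟩ := hv
  /- An old cap cannot contain `a` or `b`, which would be free non-trivial vertices under it;
  so an old cap with an end between `a` and `b` lies between them. -/
  have hout : ∀ q ∈ C, ¬ (q.1 < a ∧ a < q.2) ∧ ¬ (q.1 < b ∧ b < q.2) := fun q hq =>
    ⟨fun ⟨h1, h2⟩ => hna (h.covered q hq a h1 h2 (by simp [hda])),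
      fun ⟨h1, h2⟩ => hnb (h.covered q hq b h1 h2 (by simp [hdb]))⟩
  have hends : ∀ q ∈ C, q.1 ≠ a ∧ q.1 ≠ b ∧ q.2 ≠ a ∧ q.2 ≠ b := fun q hq =>
    ⟨fun he => hna (onCap_of_mem hq (Or.inl he.symm)),
      fun he => hnb (onCap_of_mem hq (Or.inl he.symm)),
      fun he => hna (onCap_of_mem hq (Or.inr he.symm)),
      fun he => hnb (onCap_of_mem hq (Or.inr he.symm))⟩
  refine ⟨?_, ?_, ?_, ?_, ?_, ?_, ?_⟩
  · rintro p (rfl | hp)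
    exacts [hab, h.lt p hp]
  · rintro p (rfl | hp)
    exacts [hda, h.fst_vee p hp]
  · rintro p (rfl | hp)
    exacts [hdb, h.snd_wedge p hp]
  · refine injOn_insert_of_notMem_image h.injOn_fst ?_
    rintro ⟨q, hq, hqa⟩
    exact hna (onCap_of_mem hq (Or.inl hqa.symm))
  · refine injOn_insert_of_notMem_image h.injOn_snd ?_
    rintro ⟨q, hq, hqb⟩
    exact hnb (onCap_of_mem hq (Or.inr hqb.symm))
  · rintro p (rfl | hp) q (rfl | hq) h1 h2
    · omega
    · have := h.lt q hq
      have := hout q hq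
      have := hends q hq
      omega
    · have := h.lt p hp
      have := hout p hp
      omega
    · exact h.noncrossing p hp q hq h1 h2
  · rintro p (rfl | hp) k h1 h2 hk
    · exact ((hint k h1 h2).resolve_left hk).mono (Set.subset_insert _ _)
    · exact (h.covered p hp k h1 h2 hk).mono (Set.subset_insert _ _)

lemma of_reachable (h : Reachable d C) : IsNestedCaps d C := by
  induction h with
  | refl => exact empty
  | tail _ step ih =>
    obtain ⟨a, b, hv, rfl⟩ := step
    exact ih.insert_validPair hv

end IsNestedCaps

/-- Between an uncapped `∨∧` pair there is a closer uncapped pair, down to a neighbouring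
one. -/
lemma Complete.saturated {d : ℤ → Lbl} {C : Set (ℤ × ℤ)} (h : Complete d C) (m n : ℤ)
    (hmn : m < n) (hdm : d m = Lbl.vee) (hdn : d n = Lbl.wedge) (hm : ¬ OnCap C m)
    (hn : ¬ OnCap C n) : False := by
  induction hgap : (n - m).toNat using Nat.strong_induction_on generalizing m n with
  | _ g ih =>
    obtain ⟨k, hk1, hk2, hk, hkC⟩ : ∃ k, m < k ∧ k < n ∧ ¬ Triv (d k) ∧ ¬ OnCap C k := by
      by_contra! hno
      exact h ⟨m, n, hmn, hdm, hdn, hm, hn, fun k h1 h2 =>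
        or_iff_not_imp_left.2 (hno k h1 h2)⟩
    rcases not_triv_iff.1 hk with hkv | hkw
    · exact ih _ (by omega) k n hk2 hkv hdn hkC hn rfl
    · exact ih _ (by omega) m k hk1 hdm hkw hm hkC rfl

lemma IsCapDiagram.isCapMatching {d : ℤ → Lbl} {C : Set (ℤ × ℤ)} (h : IsCapDiagram d C) :
    IsCapMatching d C :=
  { IsNestedCaps.of_reachable h.1 with saturated := h.2.saturated }

namespace IsCapMatching

variable {d : ℤ → Lbl} {C₁ C₂ : Set (ℤ × ℤ)}

/-- A cap of `C₁` missing from `C₂` forces a narrower cap in the symmetric difference. -/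
lemma mem_of_mem (h₁ : IsCapMatching d C₁) (h₂ : IsCapMatching d C₂) {p : ℤ × ℤ} (hp : p ∈ C₁)
    (hsmall : ∀ q : ℤ × ℤ, (q.2 - q.1).toNat < (p.2 - p.1).toNat → (q ∈ C₁ ↔ q ∈ C₂)) :
    p ∈ C₂ := by
  have hab := h₁.lt p hp
  have hda := h₁.fst_vee p hp
  have hdb := h₁.snd_wedge p hp
  have hnarrow : ∀ q : ℤ × ℤ, q.1 < q.2 → p.1 ≤ q.1 → q.2 ≤ p.2 → q ≠ p →
      (q ∈ C₁ ↔ q ∈ C₂) := by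
    intro q hq h1 h2 hqp
    refine hsmall q ?_
    rcases h1.lt_or_eq with h1 | h1 <;> rcases h2.lt_or_eq with h2 | h2
    all_goals first | omega | exact absurd (Prod.ext h1.symm h2) hqp
  obtain ⟨s, hs, hsa⟩ : ∃ s ∈ C₂, s.1 = p.1 := by
    refine h₂.exists_fst_eq_of_vee (by_contra fun ha => ?_) hda
    obtain ⟨q, hq, hqb⟩ := h₂.exists_snd_eq_of_wedge
      (by_contra fun hb => h₂.saturated _ _ hab hda hdb ha hb) hdb
    have hq12 := h₂.lt q hq
    rcases lt_trichotomy q.1 p.1 with hlt | heq | hgt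
    · exact ha (h₂.covered q hq _ hlt (by omega) (by simp [hda]))
    · exact ha (onCap_of_mem hq (Or.inl heq.symm))
    · obtain ⟨r, hr, hr1, hr2, hqr⟩ :=
        h₁.nested hp hgt (by omega) (by simp [h₂.fst_vee q hq])
      have hrC₂ := (hnarrow r (h₁.lt r hr) hr1.le hr2.le (by rintro rfl; omega)).1 hr
      obtain rfl : r = q := h₂.eq_of_endpoint hrC₂ hq hqr (Or.inl rfl)
      omega
  have hs12 := h₂.lt s hs
  rcases lt_trichotomy s.2 p.2 with hlt | heq | hgt
  · have hsC₁ := (hnarrow s hs12 hsa.ge hlt.le (by rintro rfl; omega)).2 hs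
    obtain rfl := h₁.eq_of_fst_eq hsC₁ hp hsa
    omega
  · rwa [← Prod.ext hsa heq]
  · obtain ⟨t, ht, ht1, ht2, hbt⟩ := h₂.nested hs (by omega) hgt (by simp [hdb])
    obtain ⟨t', ht', ht'b⟩ := h₂.exists_snd_eq_of_wedge (onCap_of_mem ht hbt) hdb
    obtain rfl : t' = t := h₂.eq_of_endpoint ht' ht (Or.inr ht'b.symm) hbt
    have htC₁ := (hnarrow t' (h₂.lt t' ht') (by omega) ht'b.le (by rintro rfl; omega)).2 ht'
    obtain rfl := h₁.eq_of_snd_eq htC₁ hp ht'b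
    omega

lemma unique (h₁ : IsCapMatching d C₁) (h₂ : IsCapMatching d C₂) : C₁ = C₂ := by
  ext p
  induction hw : (p.2 - p.1).toNat using Nat.strong_induction_on generalizing p with
  | _ w ih =>
    have hsmall : ∀ q : ℤ × ℤ, (q.2 - q.1).toNat < (p.2 - p.1).toNat → (q ∈ C₁ ↔ q ∈ C₂) :=
      fun q hq => ih _ (hw ▸ hq) q rfl
    exact ⟨fun hp => h₁.mem_of_mem h₂ hp hsmall,
      fun hp => h₂.mem_of_mem h₁ hp fun q hq => (hsmall q hq).symm⟩

end IsCapMatching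

lemma IsNestedCaps.finite {d : ℤ → Lbl} {C : Set (ℤ × ℤ)} (h : IsNestedCaps d C) (hb : Bdd d) :
    C.Finite := by
  obtain ⟨N, hleft, hright⟩ := hb
  have himg : Prod.fst '' C ⊆ Set.Ioo (-N) N := by
    rintro m ⟨p, hp, rfl⟩
    have h1 := h.fst_vee p hp
    have h2 := h.snd_wedge p hp
    have h12 := h.lt p hp
    constructor
    · by_contra! hle
      rw [hleft p.1 hle] at h1
      exact Lbl.noConfusion h1
    · by_contra! hle
      rw [hright p.2 (by omega)] at h2
      exact Lbl.noConfusion h2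
  exact Set.Finite.of_finite_image ((Set.finite_Ioo _ _).subset himg) h.injOn_fst

def IsAnticlockwise (x : ℤ → Lbl) (p : ℤ × ℤ) : Prop := x p.1 = Lbl.vee ∧ x p.2 = Lbl.wedge

def IsClockwise (x : ℤ → Lbl) (p : ℤ × ℤ) : Prop := x p.1 = Lbl.wedge ∧ x p.2 = Lbl.vee

def CapOriented (x : ℤ → Lbl) (p : ℤ × ℤ) : Prop := IsAnticlockwise x p ∨ IsClockwise x p

section CapOriented

variable {x y : ℤ → Lbl} {p : ℤ × ℤ}

lemma IsAnticlockwise.not_isClockwise (h : IsAnticlockwise x p) : ¬ IsClockwise x p :=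
  fun hc => Lbl.noConfusion (h.1.symm.trans hc.1)

lemma IsAnticlockwise.of_capOriented_fst (h : CapOriented x p) (h1 : x p.1 = Lbl.vee) :
    IsAnticlockwise x p :=
  h.resolve_right fun hc => Lbl.noConfusion (h1.symm.trans hc.1)

lemma IsAnticlockwise.of_capOriented_snd (h : CapOriented x p) (h2 : x p.2 = Lbl.wedge) :
    IsAnticlockwise x p :=
  h.resolve_right fun hc => Lbl.noConfusion (h2.symm.trans hc.2)

lemma IsClockwise.of_capOriented_fst (h : CapOriented x p) (h1 : x p.1 = Lbl.wedge) :
    IsClockwise x p :=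
  h.resolve_left fun ha => Lbl.noConfusion (h1.symm.trans ha.1)

lemma IsClockwise.of_capOriented_snd (h : CapOriented x p) (h2 : x p.2 = Lbl.vee) :
    IsClockwise x p :=
  h.resolve_left fun ha => Lbl.noConfusion (h2.symm.trans ha.2)

lemma capOriented_congr (h1 : y p.1 = x p.1) (h2 : y p.2 = x p.2) :
    CapOriented y p ↔ CapOriented x p := by
  simp only [CapOriented, IsAnticlockwise, IsClockwise, h1, h2]

lemma CapOriented.fst_eq_iff_snd_eq (hx : CapOriented x p) (hy : CapOriented y p) :
    x p.1 = y p.1 ↔ x p.2 = y p.2 := by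
  rcases hx with ⟨h1, h2⟩ | ⟨h1, h2⟩ <;> rcases hy with ⟨h3, h4⟩ | ⟨h3, h4⟩ <;>
    simp [h1, h2, h3, h4]

end CapOriented

def RaysOriented (d : ℤ → Lbl) (C : Set (ℤ × ℤ)) (x : ℤ → Lbl) : Prop :=
  (∀ n, ¬ OnCap C n → Triv (d n) → Triv (x n)) ∧
  (∀ n, ¬ OnCap C n → ¬ Triv (d n) → (x n = Lbl.vee ∨ x n = Lbl.wedge)) ∧
  (∀ m n : ℤ, m < n → ¬ OnCap C m → ¬ OnCap C n → ¬ Triv (d m) → ¬ Triv (d n) →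
    ¬ (x m = Lbl.vee ∧ x n = Lbl.wedge))

lemma oriented_iff {d : ℤ → Lbl} {C : Set (ℤ × ℤ)} {x : ℤ → Lbl} :
    Oriented d C x ↔ (∀ p ∈ C, CapOriented x p) ∧ RaysOriented d C x :=
  and_left_comm

lemma Oriented.capOriented {d : ℤ → Lbl} {C : Set (ℤ × ℤ)} {x : ℤ → Lbl}
    (h : Oriented d C x) {p : ℤ × ℤ} (hp : p ∈ C) : CapOriented x p :=
  h.2.1 p hp

lemma Oriented.raysOriented {d : ℤ → Lbl} {C : Set (ℤ × ℤ)} {x : ℤ → Lbl}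
    (h : Oriented d C x) : RaysOriented d C x :=
  (oriented_iff.1 h).2

namespace RaysOriented

variable {d₁ d₂ : ℤ → Lbl} {C₁ C₂ : Set (ℤ × ℤ)} {x₁ x₂ : ℤ → Lbl}

lemma of_agree
    (h : ∀ n, ¬ OnCap C₂ n → ¬ OnCap C₁ n ∧ (Triv (d₁ n) ↔ Triv (d₂ n)) ∧ x₁ n = x₂ n)
    (ho : RaysOriented d₁ C₁ x₁) : RaysOriented d₂ C₂ x₂ := by
  obtain ⟨o1, o3, o4⟩ := ho
  refine ⟨fun n hn ht => ?_, fun n hn ht => ?_, fun m n hmn hm hn htm htn => ?_⟩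
  · obtain ⟨hn1, ht1, hx⟩ := h n hn
    exact hx ▸ o1 n hn1 (ht1.2 ht)
  · obtain ⟨hn1, ht1, hx⟩ := h n hn
    exact hx ▸ o3 n hn1 (mt ht1.1 ht)
  · obtain ⟨hm1, htm1, hxm⟩ := h m hm
    obtain ⟨hn1, htn1, hxn⟩ := h n hn
    rw [← hxm, ← hxn]
    exact o4 m n hmn hm1 hn1 (mt htm1.1 htm) (mt htn1.1 htn)

lemma move (r₁ r₂ : ℤ)
    (hoff : ∀ n, n ≠ r₁ → n ≠ r₂ → ¬ OnCap C₂ n →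
      ¬ OnCap C₁ n ∧ (Triv (d₁ n) ↔ Triv (d₂ n)) ∧ x₁ n = x₂ n)
    (hr₁ : ¬ OnCap C₁ r₁) (hr₁t : ¬ Triv (d₁ r₁)) (hr₁C₂ : OnCap C₂ r₁)
    (hr₂t : ¬ Triv (d₂ r₂)) (hx : x₁ r₁ = x₂ r₂)
    (hbetween : ∀ k, min r₁ r₂ < k → k < max r₁ r₂ → OnCap C₂ k ∨ Triv (d₂ k))
    (ho : RaysOriented d₁ C₁ x₁) : RaysOriented d₂ C₂ x₂ := by
  obtain ⟨o1, o3, o4⟩ := ho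
  /- Each ray `n` of the second configuration comes from the ray `φ n` of the first, where
  `φ r₂ = r₁` and `φ n = n` otherwise; `φ` preserves the order of rays. -/
  have hne : ∀ n, ¬ OnCap C₂ n → n ≠ r₁ := fun n hn h => hn (h ▸ hr₁C₂)
  have hφ : ∀ n, ¬ OnCap C₂ n → ¬ Triv (d₂ n) → ∃ m, ¬ OnCap C₁ m ∧ ¬ Triv (d₁ m) ∧
      x₁ m = x₂ n ∧ (m = r₁ ∧ n = r₂ ∨ m = n ∧ n ≠ r₂) := by
    intro n hn ht
    by_cases hn₂ : n = r₂
    · exact ⟨r₁, hr₁, hr₁t, hn₂ ▸ hx, Or.inl ⟨rfl, hn₂⟩⟩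
    · obtain ⟨hn1, ht1, hxn⟩ := hoff n (hne n hn) hn₂ hn
      exact ⟨n, hn1, mt ht1.1 ht, hxn, Or.inr ⟨rfl, hn₂⟩⟩
  have houtside : ∀ n, ¬ OnCap C₂ n → ¬ Triv (d₂ n) → n ≠ r₂ →
      (r₁ < n ∧ r₂ < n) ∨ (n < r₁ ∧ n < r₂) := by
    intro n hn ht hn₂
    have := hne n hn
    by_contra! hmid
    rcases hbetween n (by omega) (by omega) with h | h
    exacts [hn h, ht h]
  refine ⟨fun n hn ht => ?_, fun n hn ht => ?_, fun m n hmn hm hn htm htn => ?_⟩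
  · have hn₂ : n ≠ r₂ := by rintro rfl; exact hr₂t ht
    obtain ⟨hn1, ht1, hxn⟩ := hoff n (hne n hn) hn₂ hn
    exact hxn ▸ o1 n hn1 (ht1.2 ht)
  · obtain ⟨m, hm1, hmt, hxm, -⟩ := hφ n hn ht
    exact hxm ▸ o3 m hm1 hmt
  · obtain ⟨m', hm1, hmt, hxm, hm'⟩ := hφ m hm htm
    obtain ⟨n', hn1, hnt, hxn, hn'⟩ := hφ n hn htn
    rw [← hxm, ← hxn]
    refine o4 m' n' ?_ hm1 hn1 hmt hnt
    rcases hm' with ⟨rfl, rfl⟩ | ⟨rfl, hm₂⟩ <;> rcases hn' with ⟨rfl, rfl⟩ | ⟨rfl, hn₂⟩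
    · omega
    · have := houtside n' hn htn hn₂
      omega
    · have := houtside m' hm htm hm₂
      omega
    · exact hmn

end RaysOriented

lemma clockCount_congr {C : Set (ℤ × ℤ)} {x y : ℤ → Lbl}
    (h : ∀ p ∈ C, x p.1 = y p.1 ∧ x p.2 = y p.2) : clockCount C x = clockCount C y := by
  unfold clockCount
  congr 1
  refine Set.sep_ext_iff.2 fun p hp => ?_
  rw [(h p hp).1, (h p hp).2]

lemma clockCount_insert_of_isClockwise {C : Set (ℤ × ℤ)} {x : ℤ → Lbl} {p : ℤ × ℤ}
    (hC : C.Finite) (hp : p ∉ C) (h : IsClockwise x p) :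
    clockCount (insert p C) x = clockCount C x + 1 := by
  unfold clockCount
  have : {q ∈ insert p C | x q.1 = Lbl.wedge ∧ x q.2 = Lbl.vee} =
      insert p {q ∈ C | x q.1 = Lbl.wedge ∧ x q.2 = Lbl.vee} := by
    ext q
    constructor
    · rintro ⟨rfl | hq, hx⟩
      exacts [Or.inl rfl, Or.inr ⟨hq, hx⟩]
    · rintro (rfl | ⟨hq, hx⟩)
      exacts [⟨Or.inl rfl, h⟩, ⟨Or.inr hq, hx⟩]
  rw [this, Set.ncard_insert_of_notMem (fun hm => hp hm.1) (hC.subset fun q hq => hq.1)]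

lemma clockCount_insert_of_not_isClockwise {C : Set (ℤ × ℤ)} {x : ℤ → Lbl} {p : ℤ × ℤ}
    (h : ¬ IsClockwise x p) : clockCount (insert p C) x = clockCount C x := by
  unfold clockCount
  congr 1
  ext q
  constructor
  · rintro ⟨rfl | hq, hx⟩
    exacts [absurd hx h, ⟨hq, hx⟩]
  · rintro ⟨hq, hx⟩
    exact ⟨Or.inr hq, hx⟩

lemma IsCapMatching.raysOriented_of_eq {d : ℤ → Lbl} {C : Set (ℤ × ℤ)} {x : ℤ → Lbl}
    (h : IsCapMatching d C) (htriv : ∀ n, ¬ OnCap C n → Triv (d n) → Triv (x n))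
    (heq : ∀ n, ¬ OnCap C n → ¬ Triv (d n) → x n = d n) : RaysOriented d C x := by
  refine ⟨htriv, fun n hn ht => heq n hn ht ▸ not_triv_iff.1 ht, ?_⟩
  rintro m n hmn hm hn htm htn ⟨hxm, hxn⟩
  exact h.saturated m n hmn (heq m hm htm ▸ hxm) (heq n hn htn ▸ hxn) hm hn

lemma SameBlock.finite_sep {d x : ℤ → Lbl} (hb : SameBlock d x) {s t : Lbl} (hst : s ≠ t) :
    {n | d n = s ∧ x n = t}.Finite :=
  hb.2.2.1.subset fun n hn => by
    rw [Set.mem_ofPred_eq, hn.1, hn.2]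
    exact hst

namespace IsNestedCaps

variable {d : ℤ → Lbl} {C : Set (ℤ × ℤ)}

lemma inter_onCap_wedge_vee (hC : IsNestedCaps d C) {x : ℤ → Lbl}
    (ho : ∀ p ∈ C, CapOriented x p) :
    {n | d n = Lbl.wedge ∧ x n = Lbl.vee} ∩ {n | OnCap C n} =
      Prod.snd '' {p ∈ C | IsClockwise x p} := by
  ext n
  constructor
  · rintro ⟨⟨hdn, hxn⟩, hn⟩
    obtain ⟨p, hp, rfl⟩ := hC.exists_snd_eq_of_wedge hn hdn
    refine ⟨p, ⟨hp, (ho p hp).resolve_left fun h => ?_⟩, rfl⟩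
    rw [h.2] at hxn
    exact Lbl.noConfusion hxn
  · rintro ⟨p, ⟨hp, hcw⟩, rfl⟩
    exact ⟨⟨hC.snd_wedge p hp, hcw.2⟩, onCap_of_mem hp (Or.inr rfl)⟩

lemma inter_onCap_vee_wedge (hC : IsNestedCaps d C) {x : ℤ → Lbl}
    (ho : ∀ p ∈ C, CapOriented x p) :
    {n | d n = Lbl.vee ∧ x n = Lbl.wedge} ∩ {n | OnCap C n} =
      Prod.fst '' {p ∈ C | IsClockwise x p} := by
  ext n
  constructor
  · rintro ⟨⟨hdn, hxn⟩, hn⟩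
    obtain ⟨p, hp, rfl⟩ := hC.exists_fst_eq_of_vee hn hdn
    refine ⟨p, ⟨hp, (ho p hp).resolve_left fun h => ?_⟩, rfl⟩
    rw [h.1] at hxn
    exact Lbl.noConfusion hxn
  · rintro ⟨p, ⟨hp, hcw⟩, rfl⟩
    exact ⟨⟨hC.fst_vee p hp, hcw.1⟩, onCap_of_mem hp (Or.inl rfl)⟩

/-- Both ends of a clockwise cap change label, so in a block the changes `∧ → ∨` and `∨ → ∧`
on the rays balance. -/
lemma ncard_rays_eq (hC : IsNestedCaps d C) {x : ℤ → Lbl} (hb : SameBlock d x)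
    (ho : ∀ p ∈ C, CapOriented x p) :
    ({n | d n = Lbl.wedge ∧ x n = Lbl.vee} \ {n | OnCap C n}).ncard =
      ({n | d n = Lbl.vee ∧ x n = Lbl.wedge} \ {n | OnCap C n}).ncard := by
  have h₁ := Set.ncard_inter_add_ncard_sdiff_eq_ncard {n | d n = Lbl.wedge ∧ x n = Lbl.vee}
    {n | OnCap C n} (hb.finite_sep (by decide))
  have h₂ := Set.ncard_inter_add_ncard_sdiff_eq_ncard {n | d n = Lbl.vee ∧ x n = Lbl.wedge}
    {n | OnCap C n} (hb.finite_sep (by decide))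
  rw [hC.inter_onCap_wedge_vee ho, (hC.injOn_snd.mono (Set.sep_subset _ _)).ncard_image] at h₁
  rw [hC.inter_onCap_vee_wedge ho, (hC.injOn_fst.mono (Set.sep_subset _ _)).ncard_image] at h₂
  have := hb.2.2.2
  omega

lemma exists_ray_iff (hC : IsNestedCaps d C) {x : ℤ → Lbl} (hb : SameBlock d x)
    (ho : ∀ p ∈ C, CapOriented x p) :
    (∃ n, ¬ OnCap C n ∧ d n = Lbl.wedge ∧ x n = Lbl.vee) ↔
      ∃ n, ¬ OnCap C n ∧ d n = Lbl.vee ∧ x n = Lbl.wedge := by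
  have key : ∀ s t : Lbl, s ≠ t → ((∃ n, ¬ OnCap C n ∧ d n = s ∧ x n = t) ↔
      0 < ({n | d n = s ∧ x n = t} \ {n | OnCap C n}).ncard) := by
    intro s t hst
    rw [Set.ncard_pos (hb.finite_sep hst).sdiff]
    exact ⟨fun ⟨n, hn, hs, ht⟩ => ⟨n, ⟨hs, ht⟩, hn⟩, fun ⟨n, ⟨hs, ht⟩, hn⟩ => ⟨n, hn, hs, ht⟩⟩
  rw [key _ _ (by decide), key _ _ (by decide), hC.ncard_rays_eq hb ho]

end IsNestedCaps

def Lbl.swap : Lbl → Lbl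
  | Lbl.circ => Lbl.circ
  | Lbl.times => Lbl.times
  | Lbl.vee => Lbl.wedge
  | Lbl.wedge => Lbl.vee

@[simp] lemma Lbl.swap_swap (s : Lbl) : s.swap.swap = s := by
  cases s <;> rfl

@[simp] lemma Lbl.swap_eq_vee {s : Lbl} : s.swap = Lbl.vee ↔ s = Lbl.wedge := by
  cases s <;> simp [Lbl.swap]

@[simp] lemma Lbl.swap_eq_wedge {s : Lbl} : s.swap = Lbl.wedge ↔ s = Lbl.vee := by
  cases s <;> simp [Lbl.swap]

@[simp] lemma triv_swap {s : Lbl} : Triv s.swap ↔ Triv s := by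
  cases s <;> simp [Triv, Lbl.swap]

/-- `∨` and `∧` are exchanged so that caps go to caps. -/
def mirror (c : ℤ) (d : ℤ → Lbl) : ℤ → Lbl := fun n => (d (c - n)).swap

def mirrorCaps (c : ℤ) (C : Set (ℤ × ℤ)) : Set (ℤ × ℤ) := (fun p => (c - p.2, c - p.1)) ⁻¹' C

section Mirror

variable (c : ℤ) {d x : ℤ → Lbl} {C : Set (ℤ × ℤ)}

@[simp] lemma mirror_apply (n : ℤ) : mirror c d n = (d (c - n)).swap := rfl

@[simp] lemma mirror_mirror : mirror c (mirror c d) = d := by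
  funext n
  simp

@[simp] lemma mem_mirrorCaps {p : ℤ × ℤ} : p ∈ mirrorCaps c C ↔ (c - p.2, c - p.1) ∈ C :=
  Iff.rfl

@[simp] lemma mirrorCaps_mirrorCaps : mirrorCaps c (mirrorCaps c C) = C := by
  ext p
  simp

@[simp] lemma onCap_mirrorCaps {n : ℤ} : OnCap (mirrorCaps c C) n ↔ OnCap C (c - n) := by
  constructor
  · rintro ⟨p, hp, hpn⟩
    exact ⟨(c - p.2, c - p.1), hp, by simp only; omega⟩
  · rintro ⟨p, hp, hpn⟩
    exact ⟨(c - p.2, c - p.1), by simpa using hp, by omega⟩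

lemma IsNestedCaps.mirror (h : IsNestedCaps d C) : IsNestedCaps (mirror c d) (mirrorCaps c C) := by
  refine ⟨fun p hp => ?_, fun p hp => ?_, fun p hp => ?_, fun p hp q hq hpq => ?_,
    fun p hp q hq hpq => ?_, fun p hp q hq h1 h2 => ?_, fun p hp k h1 h2 hk => ?_⟩
  · have := h.lt _ hp
    simp only at this
    omega
  · simpa using h.snd_wedge _ hp
  · simpa using h.fst_vee _ hp
  · have := h.eq_of_snd_eq hp hq (by simp only; rw [hpq])
    simp only [Prod.mk.injEq] at this
    exact Prod.ext (by omega) (by omega)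
  · have := h.eq_of_fst_eq hp hq (by simp only; rw [hpq])
    simp only [Prod.mk.injEq] at this
    exact Prod.ext (by omega) (by omega)
  · have := h.noncrossing_snd hp hq (by simp only; omega) (by simp only; omega)
    simp only at this
    omega
  · rw [onCap_mirrorCaps]
    exact h.covered _ hp (c - k) (by simp only; omega) (by simp only; omega) (by simpa using hk)

lemma IsCapMatching.mirror (h : IsCapMatching d C) :
    IsCapMatching (mirror c d) (mirrorCaps c C) := by
  refine ⟨h.toIsNestedCaps.mirror c, fun m n hmn hdm hdn hm hn => ?_⟩
  simp only [mirror_apply, Lbl.swap_eq_vee, Lbl.swap_eq_wedge, onCap_mirrorCaps] at hdm hdn hm hn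
  exact h.saturated (c - n) (c - m) (by omega) hdn hdm hn hm

lemma Oriented.mirror (h : Oriented d C x) :
    Oriented (mirror c d) (mirrorCaps c C) (mirror c x) := by
  obtain ⟨o1, o2, o3, o4⟩ := h
  refine ⟨fun n hn ht => ?_, fun p hp => ?_, fun n hn ht => ?_,
    fun m n hmn hm hn htm htn hmn' => ?_⟩
  · simp only [onCap_mirrorCaps, mirror_apply, triv_swap] at hn ht ⊢
    exact o1 _ hn ht
  · rcases o2 _ hp with ⟨h1, h2⟩ | ⟨h1, h2⟩
    · exact Or.inl ⟨by simpa using h2, by simpa using h1⟩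
    · exact Or.inr ⟨by simpa using h2, by simpa using h1⟩
  · simp only [onCap_mirrorCaps, mirror_apply, triv_swap, Lbl.swap_eq_vee,
      Lbl.swap_eq_wedge] at hn ht ⊢
    exact (o3 _ hn ht).symm
  · simp only [onCap_mirrorCaps, mirror_apply, triv_swap, Lbl.swap_eq_vee,
      Lbl.swap_eq_wedge] at hm hn htm htn hmn'
    exact o4 (c - n) (c - m) (by omega) hn hm htn htm ⟨hmn'.2, hmn'.1⟩

@[simp] lemma oriented_mirror_iff :
    Oriented (mirror c d) (mirrorCaps c C) (mirror c x) ↔ Oriented d C x :=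
  ⟨fun h => by simpa using h.mirror c, Oriented.mirror c⟩

@[simp] lemma clockCount_mirror : clockCount (mirrorCaps c C) (mirror c x) = clockCount C x := by
  have hinv : Function.Involutive fun p : ℤ × ℤ => (c - p.2, c - p.1) := fun p => by simp
  unfold clockCount
  convert Set.ncard_preimage_of_injective_subset_range hinv.injective
    (hinv.surjective.range_eq ▸ Set.subset_univ _) using 2
  ext p
  simp only [Set.mem_ofPred_eq, mem_mirrorCaps, mirror_apply, Lbl.swap_eq_vee, Lbl.swap_eq_wedge,
    Set.mem_preimage]
  tauto

lemma Set.Finite.mirrorCaps (h : C.Finite) : (mirrorCaps c C).Finite :=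
  h.preimage fun p _ q _ hpq => by
    simp only [Prod.mk.injEq] at hpq
    exact Prod.ext (by omega) (by omega)

end Mirror

structure WallSwap (i : ℤ) (x y : ℤ → Lbl) : Prop where
  plus_pred : x (i - 1) = Lbl.vee
  plus_self : x i = Lbl.wedge
  minus_pred : y (i - 1) = Lbl.wedge
  minus_self : y i = Lbl.vee
  eq_of_ne : ∀ n, n ≠ i - 1 → n ≠ i → y n = x n

namespace WallSwap

variable {i : ℤ} {x y : ℤ → Lbl}

lemma triv_iff (h : WallSwap i x y) (n : ℤ) : Triv (y n) ↔ Triv (x n) := by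
  by_cases h1 : n = i - 1
  · simp [h1, h.plus_pred, h.minus_pred]
  by_cases h2 : n = i
  · simp [h2, h.plus_self, h.minus_self]
  rw [h.eq_of_ne n h1 h2]

lemma ne_of_triv (h : WallSwap i x y) {n : ℤ} (hn : Triv (x n)) : n ≠ i - 1 ∧ n ≠ i := by
  constructor <;> rintro rfl <;> simp [h.plus_pred, h.plus_self] at hn

end WallSwap

lemma SameBlock.symm {d x : ℤ → Lbl} (h : SameBlock d x) : SameBlock x d := by
  obtain ⟨h1, h2, hfin, hcard⟩ := h
  refine ⟨h2, h1, by simpa only [ne_comm] using hfin, ?_⟩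
  simpa only [and_comm] using hcard.symm

/-- One change `∧ → ∨` and one change `∨ → ∧` are added. -/
lemma SameBlock.wallSwap_right {i : ℤ} {d x y : ℤ → Lbl} (hb : SameBlock d x)
    (hxy : WallSwap i x y) (hd1 : d (i - 1) = Lbl.vee) (hd2 : d i = Lbl.wedge) :
    SameBlock d y := by
  obtain ⟨ht1, ht2, hfin, hcard⟩ := hb
  have hup : {n | d n = Lbl.wedge ∧ y n = Lbl.vee} =
      insert i {n | d n = Lbl.wedge ∧ x n = Lbl.vee} := by
    ext n
    by_cases h1 : n = i - 1
    · simp [h1, hd1]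
    by_cases h2 : n = i
    · simp [h2, hd2, hxy.minus_self]
    simp [hxy.eq_of_ne n h1 h2, h2]
  have hdown : {n | d n = Lbl.vee ∧ y n = Lbl.wedge} =
      insert (i - 1) {n | d n = Lbl.vee ∧ x n = Lbl.wedge} := by
    ext n
    by_cases h1 : n = i - 1
    · simp [h1, hd1, hxy.minus_pred]
    by_cases h2 : n = i
    · simp [h2, hd2, show i ≠ i - 1 by omega]
    simp [hxy.eq_of_ne n h1 h2, h1]
  refine ⟨fun n hn => ?_, fun n hn => ?_, ?_, ?_⟩
  · have hne : n ≠ i - 1 ∧ n ≠ i := by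
      constructor <;> rintro rfl <;> simp [hd1, hd2] at hn
    rw [hxy.eq_of_ne n hne.1 hne.2, ht1 n hn]
  · obtain ⟨h1, h2⟩ := hxy.ne_of_triv ((hxy.triv_iff n).1 hn)
    rw [hxy.eq_of_ne n h1 h2] at hn ⊢
    exact ht2 n hn
  · refine ((hfin.insert i).insert (i - 1)).subset fun n hn => ?_
    by_cases h1 : n = i - 1
    · exact Or.inl h1
    by_cases h2 : n = i
    · exact Or.inr (Or.inl h2)
    · exact Or.inr (Or.inr (by simpa [hxy.eq_of_ne n h1 h2] using hn))
  · rw [hup, hdown, Set.ncard_insert_of_notMem (by simp [hxy.plus_self]) (hfin.subset ?_),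
      Set.ncard_insert_of_notMem (by simp [hxy.plus_pred]) (hfin.subset ?_), hcard]
    all_goals
      rintro n ⟨h1, h2⟩
      simp [h1, h2]

lemma SameBlock.wallSwap_left {i : ℤ} {d d' x : ℤ → Lbl} (hb : SameBlock d x)
    (hd : WallSwap i d d') (hx1 : x (i - 1) = Lbl.vee) (hx2 : x i = Lbl.wedge) :
    SameBlock d' x :=
  (hb.symm.wallSwap_right hd hx1 hx2).symm

lemma SameBlock.wallSwap {i : ℤ} {d d' x x' : ℤ → Lbl} (hb : SameBlock d x)
    (hd : WallSwap i d d') (hx : WallSwap i x x') : SameBlock d' x' := by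
  obtain ⟨ht1, ht2, hfin, hcard⟩ := hb
  have hsep : ∀ P : Lbl → Lbl → Prop, (∀ s, ¬ P s s) →
      {n | P (d' n) (x' n)} = {n | P (d n) (x n)} := by
    intro P hP
    ext n
    by_cases h1 : n = i - 1
    · simp [h1, hd.plus_pred, hd.minus_pred, hx.plus_pred, hx.minus_pred, hP]
    by_cases h2 : n = i
    · simp [h2, hd.plus_self, hd.minus_self, hx.plus_self, hx.minus_self, hP]
    simp [hd.eq_of_ne n h1 h2, hx.eq_of_ne n h1 h2]
  refine ⟨fun n hn => ?_, fun n hn => ?_, ?_, ?_⟩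
  · obtain ⟨h1, h2⟩ := hd.ne_of_triv ((hd.triv_iff n).1 hn)
    rw [hd.eq_of_ne n h1 h2] at hn ⊢
    rw [hx.eq_of_ne n h1 h2, ht1 n hn]
  · obtain ⟨h1, h2⟩ := hx.ne_of_triv ((hx.triv_iff n).1 hn)
    rw [hx.eq_of_ne n h1 h2] at hn ⊢
    rw [hd.eq_of_ne n h1 h2, ht2 n hn]
  · exact (hsep (· ≠ ·) fun s h => h rfl) ▸ hfin
  · rw [hsep (fun s t => s = Lbl.wedge ∧ t = Lbl.vee) (by simp),
      hsep (fun s t => s = Lbl.vee ∧ t = Lbl.wedge) (by simp)]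
    exact hcard

namespace WallSwap

variable {i : ℤ} {x y d : ℤ → Lbl} {C : Set (ℤ × ℤ)}

lemma eq_of_onCap_ne (hxy : WallSwap i x y) (hC : IsNestedCaps d C) (hw : (i - 1, i) ∈ C)
    {p : ℤ × ℤ} (hp : p ∈ C) (hpw : p ≠ (i - 1, i)) : y p.1 = x p.1 ∧ y p.2 = x p.2 := by
  obtain ⟨e1, e2, e3, e4⟩ := hC.endpoints_ne hp hw hpw
  exact ⟨hxy.eq_of_ne _ e1 e2, hxy.eq_of_ne _ e3 e4⟩

lemma eq_of_not_onCap (hxy : WallSwap i x y) (hw : (i - 1, i) ∈ C) {n : ℤ} (hn : ¬ OnCap C n) :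
    y n = x n :=
  hxy.eq_of_ne n (fun h => hn (onCap_of_mem hw (Or.inl h)))
    (fun h => hn (onCap_of_mem hw (Or.inr h)))

/-- On the diagram with the small cap at the wall, `x` and `y` only differ on that cap. -/
lemma oriented_iff (hxy : WallSwap i x y) (hC : IsNestedCaps d C) (hw : (i - 1, i) ∈ C) :
    Oriented d C y ↔ Oriented d C x := by
  have hcaps : ∀ p ∈ C, (CapOriented y p ↔ CapOriented x p) := by
    intro p hp
    by_cases hpw : p = (i - 1, i)
    · subst hpw
      exact iff_of_true (Or.inr ⟨hxy.minus_pred, hxy.minus_self⟩)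
        (Or.inl ⟨hxy.plus_pred, hxy.plus_self⟩)
    · obtain ⟨h1, h2⟩ := hxy.eq_of_onCap_ne hC hw hp hpw
      exact capOriented_congr h1 h2
  have hrays : ∀ n, ¬ OnCap C n → ¬ OnCap C n ∧ (Triv (d n) ↔ Triv (d n)) ∧ y n = x n :=
    fun n hn => ⟨hn, Iff.rfl, hxy.eq_of_not_onCap hw hn⟩
  rw [_root_.oriented_iff, _root_.oriented_iff]
  exact and_congr (forall₂_congr hcaps) ⟨RaysOriented.of_agree hrays,
    RaysOriented.of_agree fun n hn => (hrays n hn).imp_right (And.imp_right Eq.symm)⟩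

lemma clockCount_eq (hxy : WallSwap i x y) (hC : IsNestedCaps d C) (hw : (i - 1, i) ∈ C)
    (hfin : C.Finite) : clockCount C y = clockCount C x + 1 := by
  have hC' : C = insert (i - 1, i) (C \ {(i - 1, i)}) := (Set.insert_sdiff_self_of_mem hw).symm
  have hD : ∀ p ∈ C \ {(i - 1, i)}, y p.1 = x p.1 ∧ y p.2 = x p.2 :=
    fun p hp => hxy.eq_of_onCap_ne hC hw hp.1 hp.2
  rw [hC', clockCount_insert_of_isClockwise (hfin.subset Set.sdiff_subset) (by simp)
      ⟨hxy.minus_pred, hxy.minus_self⟩,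
    clockCount_insert_of_not_isClockwise
      (IsAnticlockwise.not_isClockwise ⟨hxy.plus_pred, hxy.plus_self⟩), clockCount_congr hD]

/-- A cap at `i - 1` or `i` would have to carry two different labels at its other end;
otherwise the rays at `i - 1, i` are labelled `∨∧` by `x`. -/
lemma not_oriented_and_oriented (hxy : WallSwap i x y) (hC : IsNestedCaps d C)
    (hd1 : d (i - 1) = Lbl.wedge) (hd2 : d i = Lbl.vee) : ¬ (Oriented d C x ∧ Oriented d C y) := by
  rintro ⟨hx, hy⟩
  have hends := fun {p} (hp : p ∈ C) =>
    (hx.capOriented hp).fst_eq_iff_snd_eq (hy.capOriented hp)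
  by_cases h1 : OnCap C (i - 1)
  · obtain ⟨p, hp, hp2⟩ := hC.exists_snd_eq_of_wedge h1 hd1
    have := hC.lt p hp
    have := (hends hp).1 (hxy.eq_of_ne p.1 (by omega) (by omega)).symm
    rw [hp2, hxy.plus_pred, hxy.minus_pred] at this
    exact Lbl.noConfusion this
  by_cases h2 : OnCap C i
  · obtain ⟨p, hp, hp1⟩ := hC.exists_fst_eq_of_vee h2 hd2
    have := hC.lt p hp
    have := (hends hp).2 (hxy.eq_of_ne p.2 (by omega) (by omega)).symm
    rw [hp1, hxy.plus_self, hxy.minus_self] at this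
    exact Lbl.noConfusion this
  exact hx.raysOriented.2.2 (i - 1) i (by omega) h1 h2 (by simp [hd1]) (by simp [hd2])
    ⟨hxy.plus_pred, hxy.plus_self⟩

end WallSwap

lemma WallSwap.mirror {i : ℤ} {x y : ℤ → Lbl} (h : WallSwap i x y) :
    WallSwap i (mirror (2 * i - 1) x) (mirror (2 * i - 1) y) := by
  have e1 : 2 * i - 1 - (i - 1) = i := by ring
  have e2 : 2 * i - 1 - i = i - 1 := by ring
  refine ⟨?_, ?_, ?_, ?_, fun n h1 h2 => ?_⟩
  · simp [e1, h.plus_self]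
  · simp [e2, h.plus_pred]
  · simp [e1, h.minus_self]
  · simp [e2, h.minus_pred]
  · simp only [mirror_apply, h.eq_of_ne (2 * i - 1 - n) (by omega) (by omega)]

/-- The data of the theorem: `dp = x_{λ⁺}` with cap diagram `Cp` containing the small cap at the
wall, `dm = x_{λ⁻}`, and the weights `x = x_{μ⁺}`, `y = x_{μ⁻}`. -/
structure WallSetup (i : ℤ) (dp dm : ℤ → Lbl) (Cp : Set (ℤ × ℤ)) (x y : ℤ → Lbl) : Prop where
  swap_lambda : WallSwap i dp dm
  swap_mu : WallSwap i x y
  matching : IsCapMatching dp Cp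
  wall_mem : (i - 1, i) ∈ Cp
  finite : Cp.Finite

/-- The facts from which the recursion follows, for `Cm` the cap diagram of `dm`. -/
structure WallTransfer (dp : ℤ → Lbl) (Cp : Set (ℤ × ℤ)) (dm : ℤ → Lbl) (Cm : Set (ℤ × ℤ))
    (x y : ℤ → Lbl) : Prop where
  lower_plus : Oriented dm Cm x → Oriented dp Cp x ∧ clockCount Cm x = clockCount Cp x + 1
  lower_minus : Oriented dm Cm y → Oriented dp Cp x ∧ clockCount Cm y = clockCount Cp x
  upper : Oriented dp Cp x → Oriented dm Cm x ∨ Oriented dm Cm y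

lemma WallTransfer.of_mirror {dp dm x y : ℤ → Lbl} {Cp Cm : Set (ℤ × ℤ)} (c : ℤ)
    (h : WallTransfer (mirror c dp) (mirrorCaps c Cp) (mirror c dm) (mirrorCaps c Cm)
      (mirror c x) (mirror c y)) : WallTransfer dp Cp dm Cm x y := by
  obtain ⟨h1, h2, h3⟩ := h
  simp only [oriented_mirror_iff, clockCount_mirror] at h1 h2 h3
  exact ⟨h1, h2, h3⟩

lemma dPol_of_oriented {d : ℤ → Lbl} {C : Set (ℤ × ℤ)} {x : ℤ → Lbl} (hb : SameBlock d x)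
    (ho : Oriented d C x) : dPol d C x = LaurentPolynomial.T (clockCount C x) := by
  rw [dPol, if_pos ⟨hb, ho⟩]

lemma dPol_of_not_oriented {d : ℤ → Lbl} {C : Set (ℤ × ℤ)} {x : ℤ → Lbl}
    (ho : ¬ Oriented d C x) : dPol d C x = 0 := by
  rw [dPol, if_neg fun h => ho h.2]

lemma WallSetup.dPol_eq {i : ℤ} {dp dm : ℤ → Lbl} {Cp Cm : Set (ℤ × ℤ)} {x y : ℤ → Lbl}
    (S : WallSetup i dp dm Cp x y) (hCm : IsNestedCaps dm Cm) (hb : SameBlock dp x)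
    (hT : WallTransfer dp Cp dm Cm x y) :
    dPol dp Cp x = LaurentPolynomial.T (-1) * dPol dm Cm x + dPol dm Cm y ∧
      dPol dp Cp y = LaurentPolynomial.T 1 * dPol dm Cm y + dPol dm Cm x := by
  have hbpy := hb.wallSwap_right S.swap_mu S.swap_lambda.plus_pred S.swap_lambda.plus_self
  have hbmx := hb.wallSwap_left S.swap_lambda S.swap_mu.plus_pred S.swap_mu.plus_self
  have hbmy := hb.wallSwap S.swap_lambda S.swap_mu
  have hCp := S.matching.toIsNestedCaps
  have hpy := S.swap_mu.oriented_iff hCp S.wall_mem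
  have hcy := S.swap_mu.clockCount_eq hCp S.wall_mem S.finite
  by_cases hx : Oriented dm Cm x
  · have hy : ¬ Oriented dm Cm y := fun hy => S.swap_mu.not_oriented_and_oriented hCm
      S.swap_lambda.minus_pred S.swap_lambda.minus_self ⟨hx, hy⟩
    obtain ⟨hpx, hc⟩ := hT.lower_plus hx
    rw [dPol_of_oriented hb hpx, dPol_of_oriented hbpy (hpy.2 hpx), dPol_of_oriented hbmx hx,
      dPol_of_not_oriented hy, hc, hcy, ← LaurentPolynomial.T_add]
    simp
  by_cases hy : Oriented dm Cm y
  · obtain ⟨hpx, hc⟩ := hT.lower_minus hy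
    rw [dPol_of_oriented hb hpx, dPol_of_oriented hbpy (hpy.2 hpx), dPol_of_oriented hbmy hy,
      dPol_of_not_oriented hx, hc, hcy, ← LaurentPolynomial.T_add]
    simp [add_comm]
  have hpx : ¬ Oriented dp Cp x := fun h => (hT.upper h).elim hx hy
  rw [dPol_of_not_oriented hpx, dPol_of_not_oriented (mt hpy.1 hpx), dPol_of_not_oriented hx,
    dPol_of_not_oriented hy]
  simp

namespace WallSetup

variable {i : ℤ} {dp dm : ℤ → Lbl} {Cp : Set (ℤ × ℤ)} {x y : ℤ → Lbl} {a b : ℤ}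

lemma dm_eq (S : WallSetup i dp dm Cp x y) {n : ℤ} (h1 : n ≠ i - 1) (h2 : n ≠ i) : dm n = dp n :=
  S.swap_lambda.eq_of_ne n h1 h2

lemma endpoints_ne_wall (S : WallSetup i dp dm Cp x y) {p : ℤ × ℤ} (hp : p ∈ Cp)
    (hpw : p ≠ (i - 1, i)) : p.1 ≠ i - 1 ∧ p.1 ≠ i ∧ p.2 ≠ i - 1 ∧ p.2 ≠ i :=
  S.matching.endpoints_ne hp S.wall_mem hpw

lemma ne_wall_of_not_onCap (S : WallSetup i dp dm Cp x y) {n : ℤ} (hn : ¬ OnCap Cp n) :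
    n ≠ i - 1 ∧ n ≠ i :=
  ⟨fun h => hn (onCap_of_mem S.wall_mem (Or.inl h)),
    fun h => hn (onCap_of_mem S.wall_mem (Or.inr h))⟩

lemma onCap_of_wall (S : WallSetup i dp dm Cp x y) {n : ℤ} (hn : n = i - 1 ∨ n = i) :
    OnCap Cp n :=
  onCap_of_mem S.wall_mem hn

lemma onCap_sdiff_wall_iff (S : WallSetup i dp dm Cp x y) {n : ℤ} :
    OnCap (Cp \ {(i - 1, i)}) n ↔ OnCap Cp n ∧ n ≠ i - 1 ∧ n ≠ i := by
  constructor
  · rintro ⟨p, ⟨hp, hpw⟩, hpn⟩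
    obtain ⟨e1, e2, e3, e4⟩ := S.endpoints_ne_wall hp hpw
    exact ⟨⟨p, hp, hpn⟩, by omega, by omega⟩
  · rintro ⟨⟨p, hp, hpn⟩, h1, h2⟩
    refine ⟨p, ⟨hp, fun hpw => ?_⟩, hpn⟩
    rw [Set.mem_singleton_iff] at hpw
    subst hpw
    omega

lemma capOriented_congr_of_ne_wall (S : WallSetup i dp dm Cp x y) {z₁ z₂ : ℤ → Lbl}
    (hz : ∀ n, n ≠ i - 1 → n ≠ i → z₂ n = z₁ n) {p : ℤ × ℤ} (hp : p ∈ Cp)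
    (hpw : p ≠ (i - 1, i)) : CapOriented z₂ p ↔ CapOriented z₁ p := by
  obtain ⟨e1, e2, e3, e4⟩ := S.endpoints_ne_wall hp hpw
  exact capOriented_congr (hz _ e1 e2) (hz _ e3 e4)

lemma side_of_not_enclosed (S : WallSetup i dp dm Cp x y)
    (hN : ¬ ∃ q ∈ Cp, q.1 < i - 1 ∧ i < q.2) {p : ℤ × ℤ} (hp : p ∈ Cp)
    (hpw : p ≠ (i - 1, i)) : p.2 < i - 1 ∨ i < p.1 := by
  obtain ⟨e1, e2, e3, e4⟩ := S.endpoints_ne_wall hp hpw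
  have := S.matching.lt p hp
  by_contra! h
  exact hN ⟨p, hp, by omega, by omega⟩

lemma isNestedCaps_sdiff_wall (S : WallSetup i dp dm Cp x y)
    (hN : ¬ ∃ q ∈ Cp, q.1 < i - 1 ∧ i < q.2) : IsNestedCaps dm (Cp \ {(i - 1, i)}) := by
  have hC := S.matching.toIsNestedCaps
  refine ⟨fun p hp => hC.lt p hp.1, fun p hp => ?_, fun p hp => ?_,
    hC.injOn_fst.mono Set.sdiff_subset, hC.injOn_snd.mono Set.sdiff_subset,
    fun p hp q hq => hC.noncrossing p hp.1 q hq.1, fun p hp k h1 h2 hk => ?_⟩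
  · obtain ⟨e1, e2, -, -⟩ := S.endpoints_ne_wall hp.1 hp.2
    rw [S.dm_eq e1 e2]
    exact hC.fst_vee p hp.1
  · obtain ⟨-, -, e3, e4⟩ := S.endpoints_ne_wall hp.1 hp.2
    rw [S.dm_eq e3 e4]
    exact hC.snd_wedge p hp.1
  · have hkw : k ≠ i - 1 ∧ k ≠ i := by
      have := S.side_of_not_enclosed hN hp.1 hp.2
      omega
    rw [S.dm_eq hkw.1 hkw.2] at hk
    exact S.onCap_sdiff_wall_iff.2 ⟨hC.covered p hp.1 k h1 h2 hk, hkw⟩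

lemma endpoints_ne_of_mem_sdiff (S : WallSetup i dp dm Cp x y) (hab : (a, b) ∈ Cp) {p : ℤ × ℤ}
    (hp : p ∈ Cp \ {(i - 1, i), (a, b)}) :
    p ∈ Cp ∧ (p.1 ≠ i - 1 ∧ p.1 ≠ i ∧ p.2 ≠ i - 1 ∧ p.2 ≠ i) ∧
      (p.1 ≠ a ∧ p.1 ≠ b ∧ p.2 ≠ a ∧ p.2 ≠ b) := by
  simp only [Set.mem_sdiff, Set.mem_insert_iff, Set.mem_singleton_iff, not_or] at hp
  exact ⟨hp.1, S.endpoints_ne_wall hp.1 hp.2.1, S.matching.endpoints_ne hp.1 hab hp.2.2⟩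

lemma onCap_split_iff (S : WallSetup i dp dm Cp x y) (hab : (a, b) ∈ Cp) {n : ℤ} :
    OnCap (insert (a, i - 1) (insert (i, b) (Cp \ {(i - 1, i), (a, b)}))) n ↔ OnCap Cp n := by
  simp only [onCap_insert]
  constructor
  · rintro ((h | h) | (h | h) | ⟨p, hp, hpn⟩)
    · exact onCap_of_mem hab (Or.inl h.symm)
    · exact S.onCap_of_wall (Or.inl h.symm)
    · exact S.onCap_of_wall (Or.inr h.symm)
    · exact onCap_of_mem hab (Or.inr h.symm)
    · exact ⟨p, hp.1, hpn⟩
  · rintro ⟨p, hp, hpn⟩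
    by_cases hpw : p = (i - 1, i)
    · subst hpw
      tauto
    by_cases hpab : p = (a, b)
    · subst hpab
      tauto
    · exact Or.inr (Or.inr ⟨p, ⟨hp, by simp [hpw, hpab]⟩, hpn⟩)

lemma onCap_of_inside (S : WallSetup i dp dm Cp x y) {p : ℤ × ℤ} (hp : p ∈ Cp) {k : ℤ}
    (h1 : p.1 < k) (h2 : k < p.2) (hk : ¬ Triv (dm k)) : OnCap Cp k := by
  by_cases hkw : k = i - 1 ∨ k = i
  · exact S.onCap_of_wall hkw
  rw [not_or] at hkw
  rw [S.dm_eq hkw.1 hkw.2] at hk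
  exact S.matching.covered p hp k h1 h2 hk

lemma noncrossing_split (S : WallSetup i dp dm Cp x y) (hab : (a, b) ∈ Cp) (ha : a < i - 1)
    (hb : i < b) (hinner : ∀ r ∈ Cp, r.1 < i - 1 → i < r.2 → r ≠ (a, b) → r.1 < a ∧ b < r.2) :
    ∀ p ∈ insert (a, i - 1) (insert (i, b) (Cp \ {(i - 1, i), (a, b)})),
      ∀ q ∈ insert (a, i - 1) (insert (i, b) (Cp \ {(i - 1, i), (a, b)})),
        p.1 < q.1 → q.1 < p.2 → q.2 < p.2 := by
  have hC := S.matching.toIsNestedCaps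
  have hE := fun {p} (hp : p ∈ Cp \ {(i - 1, i), (a, b)}) => S.endpoints_ne_of_mem_sdiff hab hp
  rintro p (rfl | rfl | hp) q (rfl | rfl | hq) h1 h2 <;> try simp only at h1 h2 ⊢
  · omega
  · omega
  · obtain ⟨hq, ⟨-, -, e3, e4⟩, -⟩ := hE hq
    have := hC.noncrossing _ hab q hq h1 (by omega)
    by_contra! hle
    have := hinner q hq (by omega) (by omega) (by rintro rfl; omega)
    omega
  · omega
  · omega
  · exact hC.noncrossing _ hab q (hE hq).1 (by omega) h2
  · have := hC.noncrossing p (hE hp).1 _ hab h1 h2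
    omega
  · obtain ⟨hp, ⟨e1, -⟩, hpa, -⟩ := hE hp
    exact (hinner p hp (by omega) h2 (by rintro rfl; exact hpa rfl)).2
  · exact hC.noncrossing p (hE hp).1 q (hE hq).1 h1 h2

lemma isCapMatching_split (S : WallSetup i dp dm Cp x y) (hab : (a, b) ∈ Cp) (ha : a < i - 1)
    (hb : i < b) (hinner : ∀ r ∈ Cp, r.1 < i - 1 → i < r.2 → r ≠ (a, b) → r.1 < a ∧ b < r.2) :
    IsCapMatching dm (insert (a, i - 1) (insert (i, b) (Cp \ {(i - 1, i), (a, b)}))) := by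
  have hC := S.matching.toIsNestedCaps
  have hE := fun {p} (hp : p ∈ Cp \ {(i - 1, i), (a, b)}) => S.endpoints_ne_of_mem_sdiff hab hp
  refine ⟨⟨?_, ?_, ?_, ?_, ?_, S.noncrossing_split hab ha hb hinner, ?_⟩, ?_⟩
  · rintro p (rfl | rfl | hp)
    exacts [ha, hb, hC.lt p (hE hp).1]
  · rintro p (rfl | rfl | hp)
    · exact (S.dm_eq (by omega) (by omega)).trans (hC.fst_vee (a, b) hab)
    · exact S.swap_lambda.minus_self
    · obtain ⟨hp, ⟨e1, e2, -⟩, -⟩ := hE hp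
      exact (S.dm_eq e1 e2).trans (hC.fst_vee p hp)
  · rintro p (rfl | rfl | hp)
    · exact S.swap_lambda.minus_pred
    · exact (S.dm_eq (by omega) (by omega)).trans (hC.snd_wedge (a, b) hab)
    · obtain ⟨hp, ⟨-, -, e3, e4⟩, -⟩ := hE hp
      exact (S.dm_eq e3 e4).trans (hC.snd_wedge p hp)
  · refine injOn_insert_of_notMem_image (injOn_insert_of_notMem_image
      (hC.injOn_fst.mono Set.sdiff_subset) ?_) ?_
    · rintro ⟨p, hp, hpi⟩
      exact (hE hp).2.1.2.1 hpi
    · rintro ⟨p, rfl | hp, hpa⟩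
      · exact absurd hpa (by simp only; omega)
      · exact (hE hp).2.2.1 hpa
  · refine injOn_insert_of_notMem_image (injOn_insert_of_notMem_image
      (hC.injOn_snd.mono Set.sdiff_subset) ?_) ?_
    · rintro ⟨p, hp, hpb⟩
      exact (hE hp).2.2.2.2.2 hpb
    · rintro ⟨p, rfl | hp, hpi⟩
      · exact absurd hpi (by simp only; omega)
      · exact (hE hp).2.1.2.2.1 hpi
  · rintro p (rfl | rfl | hp) k h1 h2 hk <;> rw [S.onCap_split_iff hab] <;> try simp only at h1 h2
    · exact S.onCap_of_inside hab h1 (by omega) hk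
    · exact S.onCap_of_inside hab (by omega) h2 hk
    · exact S.onCap_of_inside (hE hp).1 h1 h2 hk
  · intro m n hmn hdm hdn hm hn
    rw [S.onCap_split_iff hab] at hm hn
    obtain ⟨m1, m2⟩ := S.ne_wall_of_not_onCap hm
    obtain ⟨n1, n2⟩ := S.ne_wall_of_not_onCap hn
    rw [S.dm_eq m1 m2] at hdm
    rw [S.dm_eq n1 n2] at hdn
    exact S.matching.saturated m n hmn hdm hdn hm hn

lemma eq_insert_insert_sdiff (S : WallSetup i dp dm Cp x y) (hab : (a, b) ∈ Cp) :
    Cp = insert (i - 1, i) (insert (a, b) (Cp \ {(i - 1, i), (a, b)})) := by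
  ext p
  by_cases hpw : p = (i - 1, i)
  · simp [hpw, S.wall_mem]
  by_cases hpab : p = (a, b)
  · simp [hpab, hab]
  · simp [hpw, hpab]

lemma oriented_split_of_oriented (S : WallSetup i dp dm Cp x y) (hab : (a, b) ∈ Cp)
    {z₁ z₂ : ℤ → Lbl} (hz : ∀ n, n ≠ i - 1 → n ≠ i → z₂ n = z₁ n)
    (hA : CapOriented z₂ (a, i - 1)) (hB : CapOriented z₂ (i, b)) (hO : Oriented dp Cp z₁) :
    Oriented dm (insert (a, i - 1) (insert (i, b) (Cp \ {(i - 1, i), (a, b)}))) z₂ := by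
  refine oriented_iff.2 ⟨?_, hO.raysOriented.of_agree fun n hn => ?_⟩
  · rintro p (rfl | rfl | ⟨hp, hpne⟩)
    · exact hA
    · exact hB
    · simp only [Set.mem_insert_iff, Set.mem_singleton_iff, not_or] at hpne
      exact (S.capOriented_congr_of_ne_wall hz hp hpne.1).2 (hO.capOriented hp)
  · rw [S.onCap_split_iff hab] at hn
    obtain ⟨h1, h2⟩ := S.ne_wall_of_not_onCap hn
    exact ⟨hn, by rw [S.dm_eq h1 h2], (hz n h1 h2).symm⟩

lemma oriented_of_oriented_split (S : WallSetup i dp dm Cp x y) (hab : (a, b) ∈ Cp)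
    {z₁ z₂ : ℤ → Lbl} (hz : ∀ n, n ≠ i - 1 → n ≠ i → z₂ n = z₁ n)
    (hW : CapOriented z₂ (i - 1, i)) (hAB : CapOriented z₂ (a, b))
    (hO : Oriented dm (insert (a, i - 1) (insert (i, b) (Cp \ {(i - 1, i), (a, b)}))) z₁) :
    Oriented dp Cp z₂ := by
  refine oriented_iff.2 ⟨?_, hO.raysOriented.of_agree fun n hn => ?_⟩
  · rw [S.eq_insert_insert_sdiff hab]
    rintro p (rfl | rfl | hp)
    · exact hW
    · exact hAB
    · have hpne := hp.2
      simp only [Set.mem_insert_iff, Set.mem_singleton_iff, not_or] at hpne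
      exact (S.capOriented_congr_of_ne_wall hz hp.1 hpne.1).2
        (hO.capOriented (Set.mem_insert_of_mem _ (Set.mem_insert_of_mem _ hp)))
  · obtain ⟨h1, h2⟩ := S.ne_wall_of_not_onCap hn
    exact ⟨(S.onCap_split_iff hab).not.2 hn, by rw [S.dm_eq h1 h2], (hz n h1 h2).symm⟩

lemma wallTransfer_split (S : WallSetup i dp dm Cp x y) (hab : (a, b) ∈ Cp) (ha : a < i - 1)
    (hb : i < b) :
    WallTransfer dp Cp dm (insert (a, i - 1) (insert (i, b) (Cp \ {(i - 1, i), (a, b)}))) x y := by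
  set E := Cp \ {(i - 1, i), (a, b)}
  have hE := fun {p} (hp : p ∈ E) => S.endpoints_ne_of_mem_sdiff hab hp
  have hEfin : E.Finite := S.finite.subset Set.sdiff_subset
  have hAE : (a, i - 1) ∉ insert (i, b) E := by
    rintro (h | hp)
    · simp only [Prod.mk.injEq] at h
      omega
    · exact (hE hp).2.2.1 rfl
  have hBE : (i, b) ∉ E := fun hp => (hE hp).2.1.2.1 rfl
  have habE : (a, b) ∉ E := fun hp => (hE hp).2.2.1 rfl
  have hya : y a = x a := S.swap_mu.eq_of_ne a (by omega) (by omega)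
  have hyb : y b = x b := S.swap_mu.eq_of_ne b (by omega) (by omega)
  have hxy : ∀ n, n ≠ i - 1 → n ≠ i → x n = y n := fun n h1 h2 => (S.swap_mu.eq_of_ne n h1 h2).symm
  have hwall : IsAnticlockwise x (i - 1, i) := ⟨S.swap_mu.plus_pred, S.swap_mu.plus_self⟩
  have hCp := S.eq_insert_insert_sdiff hab
  refine ⟨fun hO => ?_, fun hO => ?_, fun hO => ?_⟩
  · have hA := IsClockwise.of_capOriented_snd (hO.capOriented (Set.mem_insert _ _))
      S.swap_mu.plus_pred
    have hB := IsClockwise.of_capOriented_fst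
      (hO.capOriented (Set.mem_insert_of_mem _ (Set.mem_insert _ _))) S.swap_mu.plus_self
    have hAB : IsClockwise x (a, b) := ⟨hA.1, hB.2⟩
    refine ⟨S.oriented_of_oriented_split hab (fun _ _ _ => rfl) (Or.inl hwall) (Or.inr hAB) hO,
      ?_⟩
    rw [clockCount_insert_of_isClockwise (hEfin.insert _) hAE hA,
      clockCount_insert_of_isClockwise hEfin hBE hB, hCp,
      clockCount_insert_of_not_isClockwise hwall.not_isClockwise,
      clockCount_insert_of_isClockwise hEfin habE hAB]
  · have hA := IsAnticlockwise.of_capOriented_snd (hO.capOriented (Set.mem_insert _ _))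
      S.swap_mu.minus_pred
    have hB := IsAnticlockwise.of_capOriented_fst
      (hO.capOriented (Set.mem_insert_of_mem _ (Set.mem_insert _ _))) S.swap_mu.minus_self
    have hAB : IsAnticlockwise x (a, b) := ⟨hya ▸ hA.1, hyb ▸ hB.2⟩
    refine ⟨S.oriented_of_oriented_split hab hxy (Or.inl hwall) (Or.inl hAB) hO, ?_⟩
    rw [clockCount_insert_of_not_isClockwise hA.not_isClockwise,
      clockCount_insert_of_not_isClockwise hB.not_isClockwise, hCp,
      clockCount_insert_of_not_isClockwise hwall.not_isClockwise,
      clockCount_insert_of_not_isClockwise hAB.not_isClockwise, clockCount_congr fun p hp => ?_]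
    obtain ⟨-, ⟨e1, e2, e3, e4⟩, -⟩ := hE hp
    exact ⟨S.swap_mu.eq_of_ne _ e1 e2, S.swap_mu.eq_of_ne _ e3 e4⟩
  · rcases hO.capOriented hab with h | h
    · exact Or.inr (S.oriented_split_of_oriented hab S.swap_mu.eq_of_ne
        (Or.inl ⟨hya.trans h.1, S.swap_mu.minus_pred⟩)
        (Or.inl ⟨S.swap_mu.minus_self, hyb.trans h.2⟩) hO)
    · exact Or.inl (S.oriented_split_of_oriented hab (fun _ _ _ => rfl)
        (Or.inr ⟨h.1, S.swap_mu.plus_pred⟩) (Or.inr ⟨S.swap_mu.plus_self, h.2⟩) hO)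

/-- A free `∧` there would be preceded by the free `∨` at `a`. -/
lemma onCap_or_triv_of_nearest (S : WallSetup i dp dm Cp x y) (hda : dp a = Lbl.vee)
    (hfree : ¬ OnCap Cp a) (hnear : ∀ c, a < c → c < i - 1 → dp c = Lbl.vee → OnCap Cp c)
    {k : ℤ} (h1 : a < k) (h2 : k < i) : OnCap Cp k ∨ Triv (dp k) := by
  by_cases hk : k = i - 1
  · exact Or.inl (S.onCap_of_wall (Or.inl hk))
  by_cases hkC : OnCap Cp k
  · exact Or.inl hkC
  refine Or.inr (by_contra fun ht => ?_)
  rcases not_triv_iff.1 ht with hv | hw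
  · exact hkC (hnear k h1 (by omega) hv)
  · exact S.matching.saturated a k h1 hda hw hfree hkC

lemma onCap_joinLeft_iff (S : WallSetup i dp dm Cp x y) {n : ℤ} :
    OnCap (insert (a, i - 1) (Cp \ {(i - 1, i)})) n ↔ n = a ∨ (OnCap Cp n ∧ n ≠ i) := by
  rw [onCap_insert, S.onCap_sdiff_wall_iff]
  constructor
  · rintro ((h | h) | ⟨h, -, h'⟩)
    · exact Or.inl h.symm
    · exact Or.inr ⟨S.onCap_of_wall (Or.inl h.symm), by omega⟩
    · exact Or.inr ⟨h, h'⟩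
  · rintro (h | ⟨h, h'⟩)
    · exact Or.inl (Or.inl h.symm)
    · by_cases h1 : n = i - 1
      · exact Or.inl (Or.inr h1.symm)
      · exact Or.inr ⟨h, h1, h'⟩

lemma isCapMatching_joinLeft (S : WallSetup i dp dm Cp x y)
    (hN : ¬ ∃ q ∈ Cp, q.1 < i - 1 ∧ i < q.2) (ha : a < i - 1) (hda : dp a = Lbl.vee)
    (hfree : ¬ OnCap Cp a) (hnear : ∀ c, a < c → c < i - 1 → dp c = Lbl.vee → OnCap Cp c) :
    IsCapMatching dm (insert (a, i - 1) (Cp \ {(i - 1, i)})) := by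
  have hdma : dm a = Lbl.vee := (S.dm_eq (by omega) (by omega)).trans hda
  refine ⟨(S.isNestedCaps_sdiff_wall hN).insert_validPair ⟨ha, hdma, S.swap_lambda.minus_pred,
    fun h => hfree (S.onCap_sdiff_wall_iff.1 h).1, fun h => (S.onCap_sdiff_wall_iff.1 h).2.1 rfl,
    fun k h1 h2 => ?_⟩, fun m n hmn hdm hdn hm hn => ?_⟩
  · rw [S.dm_eq (by omega) (by omega), S.onCap_sdiff_wall_iff]
    rcases S.onCap_or_triv_of_nearest hda hfree hnear h1 (by omega) with h | h
    · exact Or.inr ⟨h, by omega, by omega⟩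
    · exact Or.inl h
  rw [S.onCap_joinLeft_iff, not_or, not_and_or, not_not] at hm hn
  have hnC : ¬ OnCap Cp n := by
    refine hn.2.resolve_right fun hni => ?_
    rw [hni, S.swap_lambda.minus_self] at hdn
    exact Lbl.noConfusion hdn
  obtain ⟨n1, n2⟩ := S.ne_wall_of_not_onCap hnC
  rw [S.dm_eq n1 n2] at hdn
  rcases hm.2 with hmC | rfl
  · obtain ⟨m1, m2⟩ := S.ne_wall_of_not_onCap hmC
    rw [S.dm_eq m1 m2] at hdm
    exact S.matching.saturated m n hmn hdm hdn hmC hnC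
  · exact S.matching.saturated a n (by omega) hda hdn hfree hnC

lemma oriented_joinLeft_of_oriented (S : WallSetup i dp dm Cp x y) (ha : a < i - 1)
    (hda : dp a = Lbl.vee) (hfree : ¬ OnCap Cp a)
    (hnear : ∀ c, a < c → c < i - 1 → dp c = Lbl.vee → OnCap Cp c)
    {z₁ z₂ : ℤ → Lbl} (hz : ∀ n, n ≠ i - 1 → n ≠ i → z₂ n = z₁ n)
    (hA : CapOriented z₂ (a, i - 1)) (hza : z₁ a = z₂ i) (hO : Oriented dp Cp z₁) :
    Oriented dm (insert (a, i - 1) (Cp \ {(i - 1, i)})) z₂ := by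
  refine oriented_iff.2 ⟨?_, hO.raysOriented.move a i (fun n hna hni hn => ?_) hfree
    (by simp [hda]) (S.onCap_joinLeft_iff.2 (Or.inl rfl)) (by simp [S.swap_lambda.minus_self])
    hza fun k h1 h2 => ?_⟩
  · rintro p (rfl | hp)
    exacts [hA, (S.capOriented_congr_of_ne_wall hz hp.1 hp.2).2 (hO.capOriented hp.1)]
  · rw [S.onCap_joinLeft_iff, not_or, not_and_or, not_not] at hn
    have hnC := hn.2.resolve_right hni
    obtain ⟨h1, h2⟩ := S.ne_wall_of_not_onCap hnC
    exact ⟨hnC, by rw [S.dm_eq h1 h2], (hz n h1 h2).symm⟩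
  · rcases S.onCap_or_triv_of_nearest hda hfree hnear (k := k) (by omega) (by omega) with h | h
    · exact Or.inl (S.onCap_joinLeft_iff.2 (Or.inr ⟨h, by omega⟩))
    · exact Or.inr ((S.swap_lambda.triv_iff k).2 h)

lemma oriented_of_oriented_joinLeft (S : WallSetup i dp dm Cp x y) (ha : a < i - 1)
    (hda : dp a = Lbl.vee) (hfree : ¬ OnCap Cp a)
    (hnear : ∀ c, a < c → c < i - 1 → dp c = Lbl.vee → OnCap Cp c)
    {z₁ z₂ : ℤ → Lbl} (hz : ∀ n, n ≠ i - 1 → n ≠ i → z₂ n = z₁ n)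
    (hW : CapOriented z₂ (i - 1, i)) (hza : z₁ i = z₂ a)
    (hO : Oriented dm (insert (a, i - 1) (Cp \ {(i - 1, i)})) z₁) : Oriented dp Cp z₂ := by
  refine oriented_iff.2 ⟨?_, hO.raysOriented.move i a (fun n hni hna hn => ?_) (fun h => ?_)
    (by simp [S.swap_lambda.minus_self]) (S.onCap_of_wall (Or.inr rfl)) (by simp [hda]) hza
    fun k h1 h2 => S.onCap_or_triv_of_nearest hda hfree hnear (by omega) (by omega)⟩
  · rw [← Set.insert_sdiff_self_of_mem S.wall_mem]
    rintro p (rfl | hp)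
    exacts [hW, (S.capOriented_congr_of_ne_wall hz hp.1 hp.2).2
      (hO.capOriented (Set.mem_insert_of_mem _ hp))]
  · obtain ⟨h1, h2⟩ := S.ne_wall_of_not_onCap hn
    refine ⟨fun h => ?_, by rw [S.dm_eq h1 h2], (hz n h1 h2).symm⟩
    rcases S.onCap_joinLeft_iff.1 h with h | h
    exacts [hna h, hn h.1]
  · rcases S.onCap_joinLeft_iff.1 h with h | h
    exacts [by omega, h.2 rfl]

lemma wallTransfer_joinLeft (S : WallSetup i dp dm Cp x y) (ha : a < i - 1)
    (hda : dp a = Lbl.vee) (hfree : ¬ OnCap Cp a)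
    (hnear : ∀ c, a < c → c < i - 1 → dp c = Lbl.vee → OnCap Cp c) :
    WallTransfer dp Cp dm (insert (a, i - 1) (Cp \ {(i - 1, i)})) x y := by
  set D := Cp \ {(i - 1, i)}
  have hDfin : D.Finite := S.finite.subset Set.sdiff_subset
  have hCp : Cp = insert (i - 1, i) D := (Set.insert_sdiff_self_of_mem S.wall_mem).symm
  have hAD : (a, i - 1) ∉ D := fun hp => hfree (onCap_of_mem hp.1 (Or.inl rfl))
  have hya : y a = x a := S.swap_mu.eq_of_ne a (by omega) (by omega)
  have hxy : ∀ n, n ≠ i - 1 → n ≠ i → x n = y n := fun n h1 h2 => (S.swap_mu.eq_of_ne n h1 h2).symm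
  have hwall : IsAnticlockwise x (i - 1, i) := ⟨S.swap_mu.plus_pred, S.swap_mu.plus_self⟩
  refine ⟨fun hO => ?_, fun hO => ?_, fun hO => ?_⟩
  · have hA := IsClockwise.of_capOriented_snd (hO.capOriented (Set.mem_insert _ _))
      S.swap_mu.plus_pred
    refine ⟨S.oriented_of_oriented_joinLeft ha hda hfree hnear (fun _ _ _ => rfl) (Or.inl hwall)
      (S.swap_mu.plus_self.trans hA.1.symm) hO, ?_⟩
    rw [clockCount_insert_of_isClockwise hDfin hAD hA, hCp,
      clockCount_insert_of_not_isClockwise hwall.not_isClockwise]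
  · have hA := IsAnticlockwise.of_capOriented_snd (hO.capOriented (Set.mem_insert _ _))
      S.swap_mu.minus_pred
    refine ⟨S.oriented_of_oriented_joinLeft ha hda hfree hnear hxy (Or.inl hwall)
      (S.swap_mu.minus_self.trans (hya ▸ hA.1).symm) hO, ?_⟩
    rw [clockCount_insert_of_not_isClockwise hA.not_isClockwise, hCp,
      clockCount_insert_of_not_isClockwise hwall.not_isClockwise,
      clockCount_congr fun p hp => S.swap_mu.eq_of_onCap_ne S.matching.toIsNestedCaps S.wall_mem
        hp.1 hp.2]
  · rcases hO.raysOriented.2.1 a hfree (by simp [hda]) with h | h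
    · exact Or.inr (S.oriented_joinLeft_of_oriented ha hda hfree hnear S.swap_mu.eq_of_ne
        (Or.inl ⟨hya.trans h, S.swap_mu.minus_pred⟩) (h.trans S.swap_mu.minus_self.symm) hO)
    · exact Or.inl (S.oriented_joinLeft_of_oriented ha hda hfree hnear (fun _ _ _ => rfl)
        (Or.inr ⟨h, S.swap_mu.plus_pred⟩) (h.trans S.swap_mu.plus_self.symm) hO)

/-- A ray changed one way forces a ray changed the other way, and the two would form a
forbidden `∨ ⋯ ∧` pair of rays. -/
lemma eq_of_not_onCap_of_no_free (S : WallSetup i dp dm Cp x y) (hb : SameBlock dp x)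
    (hL : ∀ a, a < i - 1 → dp a = Lbl.vee → OnCap Cp a)
    (hR : ∀ b, i < b → dp b = Lbl.wedge → OnCap Cp b) (hO : Oriented dp Cp x) {n : ℤ}
    (hn : ¬ OnCap Cp n) (ht : ¬ Triv (dp n)) : x n = dp n := by
  have hcaps := fun p (hp : p ∈ Cp) => hO.capOriented hp
  have hrays := hO.raysOriented
  have hside : ∀ m, ¬ OnCap Cp m → (dp m = Lbl.vee → i < m) ∧ (dp m = Lbl.wedge → m < i - 1) := by
    intro m hm
    obtain ⟨m1, m2⟩ := S.ne_wall_of_not_onCap hm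
    exact ⟨fun h => by by_contra! hle; exact hm (hL m (by omega) h),
      fun h => by by_contra! hle; exact hm (hR m (by omega) h)⟩
  rcases not_triv_iff.1 ht with hv | hw <;> rcases hrays.2.1 n hn ht with hxv | hxw
  · exact hxv.trans hv.symm
  · obtain ⟨m, hm, hdm, hxm⟩ :=
      (S.matching.exists_ray_iff hb hcaps).2 ⟨n, hn, hv, hxw⟩
    exact absurd ⟨hxm, hxw⟩ (hrays.2.2 m n (by linarith [(hside m hm).2 hdm, (hside n hn).1 hv])
      hm hn (by simp [hdm]) ht)
  · obtain ⟨m, hm, hdm, hxm⟩ :=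
      (S.matching.exists_ray_iff hb hcaps).1 ⟨n, hn, hw, hxv⟩
    exact absurd ⟨hxv, hxm⟩ (hrays.2.2 n m (by linarith [(hside m hm).1 hdm, (hside n hn).2 hw])
      hn hm ht (by simp [hdm]))
  · exact hxw.trans hw.symm

lemma isCapMatching_sdiff_wall (S : WallSetup i dp dm Cp x y)
    (hN : ¬ ∃ q ∈ Cp, q.1 < i - 1 ∧ i < q.2)
    (hL : ∀ a, a < i - 1 → dp a = Lbl.vee → OnCap Cp a)
    (hR : ∀ b, i < b → dp b = Lbl.wedge → OnCap Cp b) :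
    IsCapMatching dm (Cp \ {(i - 1, i)}) := by
  refine ⟨S.isNestedCaps_sdiff_wall hN, fun m n hmn hdm hdn hm hn => ?_⟩
  have hfree : ∀ k, ¬ OnCap (Cp \ {(i - 1, i)}) k → k ≠ i - 1 → k ≠ i →
      ¬ OnCap Cp k ∧ dm k = dp k := fun k hk h1 h2 =>
    ⟨fun h => hk (S.onCap_sdiff_wall_iff.2 ⟨h, h1, h2⟩), S.dm_eq h1 h2⟩
  have hm1 : m ≠ i - 1 := by
    rintro rfl
    rw [S.swap_lambda.minus_pred] at hdm
    exact Lbl.noConfusion hdm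
  have hn2 : n ≠ i := by
    rintro rfl
    rw [S.swap_lambda.minus_self] at hdn
    exact Lbl.noConfusion hdn
  by_cases hm2 : m = i
  · obtain ⟨hnC, hdmn⟩ := hfree n hn (by omega) hn2
    exact hnC (hR n (by omega) (hdmn ▸ hdn))
  obtain ⟨hmC, hdmm⟩ := hfree m hm hm1 hm2
  by_cases hn1 : n = i - 1
  · exact hmC (hL m (by omega) (hdmm ▸ hdm))
  obtain ⟨hnC, hdmn⟩ := hfree n hn hn1 hn2
  exact S.matching.saturated m n hmn (hdmm ▸ hdm) (hdmn ▸ hdn) hmC hnC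

lemma wallTransfer_sdiff_wall (S : WallSetup i dp dm Cp x y) (hb : SameBlock dp x)
    (hN : ¬ ∃ q ∈ Cp, q.1 < i - 1 ∧ i < q.2)
    (hL : ∀ a, a < i - 1 → dp a = Lbl.vee → OnCap Cp a)
    (hR : ∀ b, i < b → dp b = Lbl.wedge → OnCap Cp b) :
    WallTransfer dp Cp dm (Cp \ {(i - 1, i)}) x y := by
  set D := Cp \ {(i - 1, i)} with hDdef
  have hC := S.matching.toIsNestedCaps
  have hCp : Cp = insert (i - 1, i) D := (Set.insert_sdiff_self_of_mem S.wall_mem).symm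
  have hwall : IsAnticlockwise x (i - 1, i) := ⟨S.swap_mu.plus_pred, S.swap_mu.plus_self⟩
  have hxyD : ∀ p ∈ D, y p.1 = x p.1 ∧ y p.2 = x p.2 :=
    fun p hp => S.swap_mu.eq_of_onCap_ne hC S.wall_mem hp.1 hp.2
  have hwallD : ¬ OnCap D (i - 1) ∧ ¬ OnCap D i :=
    ⟨fun h => (S.onCap_sdiff_wall_iff.1 h).2.1 rfl, fun h => (S.onCap_sdiff_wall_iff.1 h).2.2 rfl⟩
  refine ⟨fun hO => ?_, fun hO => ?_, fun hO => ?_⟩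
  · exact absurd ⟨S.swap_mu.plus_pred, S.swap_mu.plus_self⟩ (hO.raysOriented.2.2 (i - 1) i
      (by omega) hwallD.1 hwallD.2 (by simp [S.swap_lambda.minus_pred])
      (by simp [S.swap_lambda.minus_self]))
  · refine ⟨oriented_iff.2 ⟨?_, hO.raysOriented.of_agree fun n hn => ?_⟩, ?_⟩
    · rw [hCp]
      rintro p (rfl | hp)
      exacts [Or.inl hwall, (capOriented_congr (hxyD p hp).1 (hxyD p hp).2).1
        (hO.capOriented hp)]
    · obtain ⟨h1, h2⟩ := S.ne_wall_of_not_onCap hn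
      exact ⟨fun h => hn (S.onCap_sdiff_wall_iff.1 h).1, by rw [S.dm_eq h1 h2],
        S.swap_mu.eq_of_ne n h1 h2⟩
    · rw [hCp, clockCount_insert_of_not_isClockwise hwall.not_isClockwise, clockCount_congr hxyD]
  · have hmatch := S.isCapMatching_sdiff_wall hN hL hR
    refine Or.inr (oriented_iff.2 ⟨fun p hp => (capOriented_congr
      (hxyD p hp).1 (hxyD p hp).2).2 (hO.capOriented hp.1),
      hmatch.raysOriented_of_eq (fun n hn ht => ?_) (fun n hn ht => ?_)⟩)
    · obtain ⟨h1, h2⟩ := S.swap_lambda.ne_of_triv ((S.swap_lambda.triv_iff n).1 ht)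
      have hnC : ¬ OnCap Cp n := fun h => hn (S.onCap_sdiff_wall_iff.2 ⟨h, h1, h2⟩)
      rw [S.swap_mu.eq_of_ne n h1 h2]
      exact hO.raysOriented.1 n hnC ((S.swap_lambda.triv_iff n).1 ht)
    · by_cases h1 : n = i - 1
      · rw [h1, S.swap_mu.minus_pred, S.swap_lambda.minus_pred]
      by_cases h2 : n = i
      · rw [h2, S.swap_mu.minus_self, S.swap_lambda.minus_self]
      have hnC : ¬ OnCap Cp n := fun h => hn (S.onCap_sdiff_wall_iff.2 ⟨h, h1, h2⟩)
      rw [S.swap_mu.eq_of_ne n h1 h2, S.dm_eq h1 h2]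
      exact S.eq_of_not_onCap_of_no_free hb hL hR hO hnC (by rwa [← S.dm_eq h1 h2])

/-- The reflection in the wall, which fixes the small cap `(i - 1, i)`. -/
lemma mirror (S : WallSetup i dp dm Cp x y) :
    WallSetup i (mirror (2 * i - 1) dp) (mirror (2 * i - 1) dm) (mirrorCaps (2 * i - 1) Cp)
      (mirror (2 * i - 1) x) (mirror (2 * i - 1) y) :=
  ⟨S.swap_lambda.mirror, S.swap_mu.mirror, S.matching.mirror _,
    by simpa [show 2 * i - 1 - i = i - 1 by ring, show 2 * i - 1 - (i - 1) = i by ring]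
      using S.wall_mem,
    S.finite.mirrorCaps _⟩

lemma exists_of_enclosed (S : WallSetup i dp dm Cp x y)
    (hN : ∃ q ∈ Cp, q.1 < i - 1 ∧ i < q.2) :
    ∃ Cm, IsCapMatching dm Cm ∧ WallTransfer dp Cp dm Cm x y := by
  obtain ⟨_, ⟨⟨a, b⟩, hab, rfl, ha, hb⟩, hmax⟩ :=
    Int.exists_greatest_of_bdd (P := fun z => ∃ q ∈ Cp, q.1 = z ∧ q.1 < i - 1 ∧ i < q.2)
      ⟨i - 1, fun z ⟨q, _, hqz, hq1, _⟩ => by omega⟩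
      (let ⟨q, hq, h1, h2⟩ := hN; ⟨q.1, q, hq, rfl, h1, h2⟩)
  have hinner : ∀ r ∈ Cp, r.1 < i - 1 → i < r.2 → r ≠ (a, b) → r.1 < a ∧ b < r.2 := by
    intro r hr h1 h2 hr'
    have hlt : r.1 < a := lt_of_le_of_ne (hmax r.1 ⟨r, hr, rfl, h1, h2⟩)
      fun h => hr' (S.matching.eq_of_fst_eq hr hab h)
    exact ⟨hlt, S.matching.noncrossing r hr _ hab hlt (by simp only; omega)⟩
  exact ⟨_, S.isCapMatching_split hab ha hb hinner, S.wallTransfer_split hab ha hb⟩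

lemma exists_of_free_left (S : WallSetup i dp dm Cp x y)
    (hN : ¬ ∃ q ∈ Cp, q.1 < i - 1 ∧ i < q.2)
    (hL : ∃ a, a < i - 1 ∧ dp a = Lbl.vee ∧ ¬ OnCap Cp a) :
    ∃ Cm, IsCapMatching dm Cm ∧ WallTransfer dp Cp dm Cm x y := by
  obtain ⟨a, ⟨ha, hda, hfree⟩, hmax⟩ := Int.exists_greatest_of_bdd ⟨i - 1, fun z h => h.1.le⟩ hL
  have hnear : ∀ c, a < c → c < i - 1 → dp c = Lbl.vee → OnCap Cp c := fun c h1 h2 h3 =>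
    by_contra fun h4 => absurd (hmax c ⟨h2, h3, h4⟩) (not_le.2 h1)
  exact ⟨_, S.isCapMatching_joinLeft hN ha hda hfree hnear,
    S.wallTransfer_joinLeft ha hda hfree hnear⟩

lemma exists_of_free_right (S : WallSetup i dp dm Cp x y)
    (hN : ¬ ∃ q ∈ Cp, q.1 < i - 1 ∧ i < q.2)
    (hR : ∃ b, i < b ∧ dp b = Lbl.wedge ∧ ¬ OnCap Cp b) :
    ∃ Cm, IsCapMatching dm Cm ∧ WallTransfer dp Cp dm Cm x y := by
  obtain ⟨b, hb, hdb, hfree⟩ := hR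
  obtain ⟨Cm, hCm, hT⟩ := S.mirror.exists_of_free_left
    (fun ⟨q, hq, h1, h2⟩ => hN ⟨_, hq, by simp only; omega, by simp only; omega⟩)
    ⟨2 * i - 1 - b, by omega, by simp [hdb], by simpa using hfree⟩
  exact ⟨mirrorCaps (2 * i - 1) Cm, by simpa using hCm.mirror (2 * i - 1),
    WallTransfer.of_mirror (2 * i - 1) (by simpa using hT)⟩

lemma exists_wallTransfer (S : WallSetup i dp dm Cp x y) (hb : SameBlock dp x) :
    ∃ Cm, IsCapMatching dm Cm ∧ WallTransfer dp Cp dm Cm x y := by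
  by_cases hN : ∃ q ∈ Cp, q.1 < i - 1 ∧ i < q.2
  · exact S.exists_of_enclosed hN
  by_cases hL : ∃ a, a < i - 1 ∧ dp a = Lbl.vee ∧ ¬ OnCap Cp a
  · exact S.exists_of_free_left hN hL
  by_cases hR : ∃ b, i < b ∧ dp b = Lbl.wedge ∧ ¬ OnCap Cp b
  · exact S.exists_of_free_right hN hR
  push Not at hL hR
  exact ⟨_, S.isCapMatching_sdiff_wall hN hL hR, S.wallTransfer_sdiff_wall hb hN hL hR⟩

end WallSetup

/-- Recursion at a wall: let `x_{λ⁺}` have a small cap at adjacent positions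
`(i−1, i)` labelled `(∨, ∧)`, and let `x_{λ⁻}` agree with it except for labels
`(∧, ∨)` there.  For weights `μ⁺, μ⁻` in the block differing only in the same
two positions (with labels `(∨, ∧)` resp. `(∧, ∨)` there),
`d_{λ⁺μ⁺}(q) = q⁻¹ d_{λ⁻μ⁺}(q) + d_{λ⁻μ⁻}(q)` and
`d_{λ⁺μ⁻}(q) = q d_{λ⁻μ⁻}(q) + d_{λ⁻μ⁺}(q)`. -/
theorem dPoly_wall_recursion (dp dm : ℤ → Lbl) (hdp : Bdd dp) (i : ℤ)
    (hp : dp (i - 1) = Lbl.vee ∧ dp i = Lbl.wedge)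
    (hm : dm (i - 1) = Lbl.wedge ∧ dm i = Lbl.vee ∧
      ∀ n, n ≠ i - 1 → n ≠ i → dm n = dp n)
    (Cp Cm : Set (ℤ × ℤ)) (hCp : IsCapDiagram dp Cp) (hCm : IsCapDiagram dm Cm)
    (hcap : (i - 1, i) ∈ Cp)
    (dmup dmum : ℤ → Lbl) (hblock : SameBlock dp dmup)
    (hmup : dmup (i - 1) = Lbl.vee ∧ dmup i = Lbl.wedge)
    (hmum : dmum (i - 1) = Lbl.wedge ∧ dmum i = Lbl.vee ∧
      ∀ n, n ≠ i - 1 → n ≠ i → dmum n = dmup n) :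
    dPol dp Cp dmup =
      LaurentPolynomial.T (-1) * dPol dm Cm dmup + dPol dm Cm dmum ∧
    dPol dp Cp dmum =
      LaurentPolynomial.T 1 * dPol dm Cm dmum + dPol dm Cm dmup := by
  have hmatch := hCp.isCapMatching
  have S : WallSetup i dp dm Cp dmup dmum :=
    ⟨⟨hp.1, hp.2, hm.1, hm.2.1, hm.2.2⟩, ⟨hmup.1, hmup.2, hmum.1, hmum.2.1, hmum.2.2⟩, hmatch,
      hcap, hmatch.finite hdp⟩
  obtain ⟨Cm', hCm', hT⟩ := S.exists_wallTransfer hblock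
  obtain rfl := hCm.isCapMatching.unique hCm'
  exact S.dPol_eq hCm'.toIsNestedCaps hblock hT
end
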